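/- arXiv:1312.0322 — 6 statements merged into one kernel-verified Lean document; each statement's English description precedes it below -/
import Mathlib

section
/- Let (A,B,P) be as in the context, with fundamental operators F_1, F_2 of (A,B,P) and G_1, G_2 of (A*,B*,P*). Then for every vector ξ in 𝒟_P one has D_P F_1 ξ = A D_P ξ − D_{P*} G_2 P ξ and D_P F_2 ξ = B D_P ξ − D_{P*} G_1 P ξ (note P ξ ∈ 𝒟_{P*}, so G_1 P ξ and G_2 P ξ are defined). -/
open ContinuousLinearMap

variable {H : Type*} [NormedAddCommGroup H] [InnerProductSpace ℂ H] [CompleteSpace H]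

/-- The defect operator `D_P = (I - P*P)^{1/2}` of an operator `P`. -/
noncomputable def defectOp (P : H →L[ℂ] H) : H →L[ℂ] H :=
  CFC.sqrt (1 - adjoint P ∘L P)

/-- The defect space `𝒟_P`, the closure of the range of `D_P`. -/
noncomputable def defectSp (P : H →L[ℂ] H) : Submodule ℂ H :=
  (LinearMap.range (defectOp P : H →ₗ[ℂ] H)).topologicalClosure

instance (P : H →L[ℂ] H) : CompleteSpace (defectSp P) :=
  (Submodule.isClosed_topologicalClosure _).completeSpace_coe

/-- `D_P h`, viewed as an element of the defect space `𝒟_P`. -/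
noncomputable def toDef (P : H →L[ℂ] H) (h : H) : defectSp P :=
  ⟨defectOp P h,
    (LinearMap.range (defectOp P : H →ₗ[ℂ] H)).le_topologicalClosure (LinearMap.mem_range_self _ h)⟩

section Auxiliary

set_option synthInstance.maxHeartbeats 1000000
set_option maxHeartbeats 2000000

open Polynomial Pointwise

private lemma aux_intertwine (a b T : H →L[ℂ] H) (ha : IsSelfAdjoint a) (hb : IsSelfAdjoint b)
    (hsa : spectrum ℝ a ⊆ Set.Icc (0:ℝ) 1) (hsb : spectrum ℝ b ⊆ Set.Icc (0:ℝ) 1)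
    (hT : T * a = b * T) (f : C(Set.Icc (0:ℝ) 1, ℝ)) :
    T * cfcHomSuperset ha hsa f = cfcHomSuperset hb hsb f * T := by
  have hpow : ∀ n : ℕ, T * a ^ n = b ^ n * T := by
    intro n; induction n with
    | zero => simp
    | succ n ih => rw [pow_succ, pow_succ, ← mul_assoc, ih, mul_assoc, hT, ← mul_assoc]
  have hpoly : ∀ p : ℝ[X], T * aeval a p = aeval b p * T := by
    intro p
    induction p using Polynomial.induction_on' with
    | add p q hp hq => rw [map_add, map_add, mul_add, add_mul, hp, hq]
    | monomial n c =>
      rw [aeval_monomial, aeval_monomial, ← mul_assoc, ← Algebra.commutes, mul_assoc, hpow,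
        ← mul_assoc]
  have key : ∀ g ∈ closure ((polynomialFunctions (Set.Icc (0:ℝ) 1)) : Set C(Set.Icc (0:ℝ) 1, ℝ)),
      T * cfcHomSuperset ha hsa g = cfcHomSuperset hb hsb g * T := by
    intro g hg
    have hcl : IsClosed {g : C(Set.Icc (0:ℝ) 1, ℝ) |
        T * cfcHomSuperset ha hsa g = cfcHomSuperset hb hsb g * T} :=
      isClosed_eq ((continuous_mul_left T).comp (cfcHomSuperset_continuous ha hsa))
        ((continuous_mul_right T).comp (cfcHomSuperset_continuous hb hsb))
    refine closure_minimal ?_ hcl hg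
    intro g hgmem
    rw [polynomialFunctions_coe] at hgmem
    obtain ⟨p, rfl⟩ := hgmem
    have hXa : (cfcHomSuperset ha hsa).toAlgHom.comp
        (toContinuousMapOnAlgHom (Set.Icc (0:ℝ) 1)) = aeval a := by
      refine Polynomial.algHom_ext ?_
      rw [AlgHom.comp_apply, aeval_X]
      show cfcHomSuperset ha hsa (toContinuousMapOnAlgHom _ X) = a
      have : toContinuousMapOnAlgHom (Set.Icc (0:ℝ) 1) X
          = ContinuousMap.restrict (Set.Icc (0:ℝ) 1) (ContinuousMap.id ℝ) := by
        ext x; simp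
      rw [this, cfcHomSuperset_id]
    have hXb : (cfcHomSuperset hb hsb).toAlgHom.comp
        (toContinuousMapOnAlgHom (Set.Icc (0:ℝ) 1)) = aeval b := by
      refine Polynomial.algHom_ext ?_
      rw [AlgHom.comp_apply, aeval_X]
      show cfcHomSuperset hb hsb (toContinuousMapOnAlgHom _ X) = b
      have : toContinuousMapOnAlgHom (Set.Icc (0:ℝ) 1) X
          = ContinuousMap.restrict (Set.Icc (0:ℝ) 1) (ContinuousMap.id ℝ) := by
        ext x; simp
      rw [this, cfcHomSuperset_id]
    show T * cfcHomSuperset ha hsa (toContinuousMapOnAlgHom _ p) = _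
    have ea : cfcHomSuperset ha hsa (toContinuousMapOnAlgHom _ p) = aeval a p := by
      have := congrArg (fun φ => φ p) hXa; simpa using this
    have eb : cfcHomSuperset hb hsb (toContinuousMapOnAlgHom _ p) = aeval b p := by
      have := congrArg (fun φ => φ p) hXb; simpa using this
    rw [ea, eb]; exact hpoly p
  apply key
  have htop := polynomialFunctions_closure_eq_top (0:ℝ) 1
  have : ((polynomialFunctions (Set.Icc (0:ℝ) 1)).topologicalClosure :
      Set C(Set.Icc (0:ℝ) 1, ℝ)) = Set.univ := by rw [htop]; rfl
  rw [Subalgebra.topologicalClosure_coe] at this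
  rw [this]; trivial

private lemma aux_nonneg (P : H →L[ℂ] H) (hP : ‖P‖ ≤ 1) : (0:H →L[ℂ] H) ≤ 1 - star P * P := by
  rw [sub_nonneg]
  rw [← CStarAlgebra.norm_le_one_iff_of_nonneg (star P * P) (star_mul_self_nonneg P)]
  calc ‖star P * P‖ = ‖P‖ * ‖P‖ := CStarRing.norm_star_mul_self
    _ ≤ 1 := by nlinarith [norm_nonneg P]

private lemma aux_spec (a : H →L[ℂ] H) (ha0 : 0 ≤ a) (ha1 : a ≤ 1) :
    spectrum ℝ a ⊆ Set.Icc (0:ℝ) 1 := by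
  intro x hx
  have h0 : 0 ≤ x := spectrum_nonneg_of_nonneg ha0 hx
  have hmem : (1:ℝ) - x ∈ spectrum ℝ (1 - a) := by
    have := spectrum.singleton_sub_eq a (1:ℝ)
    have hx' : (1:ℝ) - x ∈ {(1:ℝ)} - spectrum ℝ a := Set.sub_mem_sub rfl hx
    rw [this] at hx'
    simpa using hx'
  have h1 : 0 ≤ (1:ℝ) - x := spectrum_nonneg_of_nonneg (by rwa [sub_nonneg]) hmem
  exact ⟨h0, by linarith⟩

private lemma aux_sqrt_superset (a : H →L[ℂ] H) (ha : IsSelfAdjoint a)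
    (hsa : spectrum ℝ a ⊆ Set.Icc (0:ℝ) 1) (ha0 : 0 ≤ a) :
    CFC.sqrt a = cfcHomSuperset ha hsa ⟨fun x => Real.sqrt x, by fun_prop⟩ := by
  have h1 : CFC.sqrt a = cfc Real.sqrt a := by
    rw [CFC.sqrt_eq_cfc, cfc_nnreal_eq_real _ _ ha0]
    exact cfc_congr fun x _ => by rw [Real.sqrt]
  rw [h1, cfc_apply Real.sqrt a ha (Continuous.continuousOn (by fun_prop)),
    cfcHomSuperset_apply]
  congr 1

private lemma defectOp_eq (P : H →L[ℂ] H) : defectOp P = CFC.sqrt (1 - star P * P) := by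
  rw [defectOp, star_eq_adjoint]; rfl

private lemma defectOp_adj_eq (P : H →L[ℂ] H) :
    defectOp (adjoint P) = CFC.sqrt (1 - P * star P) := by
  rw [defectOp, adjoint_adjoint, star_eq_adjoint]; rfl

private lemma aux_nonneg' (P : H →L[ℂ] H) (hP : ‖P‖ ≤ 1) : (0:H →L[ℂ] H) ≤ 1 - P * star P := by
  have := aux_nonneg (star P) (by rw [norm_star]; exact hP)
  rwa [star_star] at this

/-- Key intertwining relation: `P D_P = D_{P*} P`. -/
private lemma defect_intertwine (P : H →L[ℂ] H) (hP : ‖P‖ ≤ 1) :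
    P * defectOp P = defectOp (adjoint P) * P := by
  have ha0 : (0:H →L[ℂ] H) ≤ 1 - star P * P := aux_nonneg P hP
  have hb0 : (0:H →L[ℂ] H) ≤ 1 - P * star P := aux_nonneg' P hP
  have ha : IsSelfAdjoint (1 - star P * P) := .of_nonneg ha0
  have hb : IsSelfAdjoint (1 - P * star P) := .of_nonneg hb0
  have hsa : spectrum ℝ (1 - star P * P) ⊆ Set.Icc (0:ℝ) 1 :=
    aux_spec _ ha0 (by simpa using sub_le_self (1:H →L[ℂ] H) (star_mul_self_nonneg P))
  have hsb : spectrum ℝ (1 - P * star P) ⊆ Set.Icc (0:ℝ) 1 :=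
    aux_spec _ hb0 (by simpa using sub_le_self (1:H →L[ℂ] H) (mul_star_self_nonneg P))
  have hT : P * (1 - star P * P) = (1 - P * star P) * P := by noncomm_ring
  rw [defectOp_eq, defectOp_adj_eq, aux_sqrt_superset _ ha hsa ha0,
    aux_sqrt_superset _ hb hsb hb0]
  exact aux_intertwine _ _ P ha hb hsa hsb hT _

private lemma defectOp_sq (P : H →L[ℂ] H) (hP : ‖P‖ ≤ 1) (h : H) :
    defectOp P (defectOp P h) = h - adjoint P (P h) := by
  have : defectOp P * defectOp P = 1 - star P * P := by
    rw [defectOp_eq]; exact CFC.sqrt_mul_sqrt_self _ (aux_nonneg P hP)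
  have := congrFun (congrArg (DFunLike.coe) this) h
  simpa [mul_apply, star_eq_adjoint] using this

private lemma dense_toDef (P : H →L[ℂ] H) : Dense (Set.range (toDef P)) := by
  rw [Subtype.dense_iff]
  intro x hx
  have himg : Subtype.val '' Set.range (toDef P) = Set.range (defectOp P) := by
    ext y
    constructor
    · rintro ⟨z, ⟨h, rfl⟩, rfl⟩; exact ⟨h, rfl⟩
    · rintro ⟨h, rfl⟩; exact ⟨toDef P h, ⟨h, rfl⟩, rfl⟩
  have hcl : (defectSp P : Set H) = closure (Set.range (defectOp P)) := by
    rw [defectSp, Submodule.topologicalClosure_coe]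
    rfl
  rw [hcl] at hx
  refine closure_mono ?_ hx
  rintro y ⟨h, rfl⟩
  exact ⟨toDef P h, ⟨h, rfl⟩, rfl⟩

end Auxiliary

/-- Lemma 2.3 (`tetralem2`): for every `ξ ∈ 𝒟_P`,
`D_P F₁ ξ = A D_P ξ − D_{P*} G₂ P ξ` and `D_P F₂ ξ = B D_P ξ − D_{P*} G₁ P ξ`. -/
theorem statement0
    (A B P : H →L[ℂ] H)
    (hAB : A ∘L B = B ∘L A) (hAP : A ∘L P = P ∘L A) (hBP : B ∘L P = P ∘L B)
    (hP : ‖P‖ ≤ 1)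
    (F₁ F₂ : defectSp P →L[ℂ] defectSp P)
    (G₁ G₂ : defectSp (adjoint P) →L[ℂ] defectSp (adjoint P))
    (hF₁ : ∀ h : H, A h - adjoint B (P h) = defectOp P (F₁ (toDef P h) : H))
    (hF₂ : ∀ h : H, B h - adjoint A (P h) = defectOp P (F₂ (toDef P h) : H))
    (hG₁ : ∀ h : H, adjoint A h - B (adjoint P h)
      = defectOp (adjoint P) (G₁ (toDef (adjoint P) h) : H))
    (hG₂ : ∀ h : H, adjoint B h - A (adjoint P h)
      = defectOp (adjoint P) (G₂ (toDef (adjoint P) h) : H))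
    (hPmap : ∀ x : H, x ∈ defectSp P → P x ∈ defectSp (adjoint P)) :
    ∀ ξ : defectSp P,
      defectOp P (F₁ ξ : H)
        = A (defectOp P (ξ : H))
          - defectOp (adjoint P) ((G₂ ⟨P (ξ : H), hPmap _ ξ.2⟩ : defectSp (adjoint P)) : H) ∧
      defectOp P (F₂ ξ : H)
        = B (defectOp P (ξ : H))
          - defectOp (adjoint P) ((G₁ ⟨P (ξ : H), hPmap _ ξ.2⟩ : defectSp (adjoint P)) : H) := by
  -- the restriction of `P` to a map `𝒟_P → 𝒟_{P*}`
  set incl : defectSp P →L[ℂ] H := (defectSp P).subtypeL with hincl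
  set incl' : defectSp (adjoint P) →L[ℂ] H := (defectSp (adjoint P)).subtypeL with hincl'
  set Pr : defectSp P →L[ℂ] defectSp (adjoint P) :=
    (P ∘L incl).codRestrict _ (fun x => hPmap _ x.2) with hPr
  have hPrD : ∀ h : H, Pr (toDef P h) = toDef (adjoint P) (P h) := by
    intro h
    apply Subtype.ext
    show P (defectOp P h) = defectOp (adjoint P) (P h)
    have := congrFun (congrArg (DFunLike.coe) (defect_intertwine P hP)) h
    simpa [mul_apply] using this
  have main : ∀ (F : defectSp P →L[ℂ] defectSp P) (G : defectSp (adjoint P) →L[ℂ] defectSp (adjoint P))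
      (C D : H →L[ℂ] H),
      (∀ h : H, C h - adjoint D (P h) = defectOp P (F (toDef P h) : H)) →
      (∀ h : H, adjoint D h - C (adjoint P h)
        = defectOp (adjoint P) (G (toDef (adjoint P) h) : H)) →
      ∀ ξ : defectSp P, defectOp P (F ξ : H)
        = C (defectOp P (ξ : H)) - defectOp (adjoint P) ((G (Pr ξ) : defectSp (adjoint P)) : H) := by
    intro F G C D hF hG ξ
    have hLR : (defectOp P ∘L (incl ∘L F))
        = (C ∘L (defectOp P ∘L incl)) - ((defectOp (adjoint P) ∘L incl') ∘L (G ∘L Pr)) := by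
      apply ContinuousLinearMap.coeFn_injective
      refine Continuous.ext_on (dense_toDef P) (map_continuous _) (map_continuous _) ?_
      rintro x ⟨h, rfl⟩
      show defectOp P (F (toDef P h) : H)
        = C (defectOp P (defectOp P h)) - defectOp (adjoint P) ((G (Pr (toDef P h))) : H)
      rw [← hF h, hPrD h, ← hG (P h), defectOp_sq P hP h]
      simp only [map_sub]
      abel
    have := congrFun (congrArg (DFunLike.coe) hLR) ξ
    simpa [hincl, hincl'] using this
  intro ξ
  refine ⟨?_, ?_⟩
  · have := main F₁ G₂ A B hF₁ hG₂ ξ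
    have hPrξ : Pr ξ = ⟨P (ξ : H), hPmap _ ξ.2⟩ := Subtype.ext rfl
    rwa [hPrξ] at this
  · have := main F₂ G₁ B A hF₂ hG₁ ξ
    have hPrξ : Pr ξ = ⟨P (ξ : H), hPmap _ ξ.2⟩ := Subtype.ext rfl
    rwa [hPrξ] at this
end

section
/- Let (A,B,P), F_1, F_2 be as in the context. Assume D_P A = F_1 D_P + F_2* D_P P and D_P B = F_2 D_P + F_1* D_P P, assume the identity A*A − B*B = D_P (F_1*F_1 − F_2*F_2) D_P (which holds for any tetrablock contraction whose fundamental operators commute), assume the commutator [F_1, F_2] = 0, and assume P has dense range. Then [F_1, F_1*] = [F_2, F_2*] as operators on 𝒟_P. -/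
open ContinuousLinearMap

set_option maxHeartbeats 1000000

variable {H : Type*} [NormedAddCommGroup H] [InnerProductSpace ℂ H] [CompleteSpace H]

/-- Theorem 2.6(i): if the fundamental operators `F₁, F₂` of `(A,B,P)` commute and `P` has
dense range, then `[F₁, F₁*] = [F₂, F₂*]`. -/
theorem statement3
    (A B P : H →L[ℂ] H)
    (hAB : A ∘L B = B ∘L A) (hAP : A ∘L P = P ∘L A) (hBP : B ∘L P = P ∘L B)
    (hP : ‖P‖ ≤ 1)
    (F₁ F₂ : defectSp P →L[ℂ] defectSp P)
    (hF₁ : ∀ h : H, A h - adjoint B (P h) = defectOp P (F₁ (toDef P h) : H))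
    (hF₂ : ∀ h : H, B h - adjoint A (P h) = defectOp P (F₂ (toDef P h) : H))
    (hDA : ∀ h : H, defectOp P (A h)
      = (F₁ (toDef P h) : H) + (adjoint F₂ (toDef P (P h)) : H))
    (hDB : ∀ h : H, defectOp P (B h)
      = (F₂ (toDef P h) : H) + (adjoint F₁ (toDef P (P h)) : H))
    (hlem : ∀ h : H, adjoint A (A h) - adjoint B (B h)
      = defectOp P ((adjoint F₁ (F₁ (toDef P h)) : H) - (adjoint F₂ (F₂ (toDef P h)) : H)))
    (hcomm : F₁ ∘L F₂ = F₂ ∘L F₁)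
    (hdense : DenseRange (P : H → H)) :
    F₁ ∘L adjoint F₁ - adjoint F₁ ∘L F₁ = F₂ ∘L adjoint F₂ - adjoint F₂ ∘L F₂ := by

  -- pointwise commutation facts
  have hBPp : ∀ h : H, B (P h) = P (B h) := fun h => DFunLike.congr_fun hBP h
  have hABp : ∀ h : H, A (B h) = B (A h) := fun h => DFunLike.congr_fun hAB h
  have hcp : ∀ x, F₁ (F₂ x) = F₂ (F₁ x) := fun x => DFunLike.congr_fun hcomm x
  have hcadj : ∀ x, adjoint F₂ (adjoint F₁ x) = adjoint F₁ (adjoint F₂ x) := by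
    have : adjoint (F₁ ∘L F₂) = adjoint (F₂ ∘L F₁) := by rw [hcomm]
    rw [adjoint_comp, adjoint_comp] at this
    exact fun x => DFunLike.congr_fun this x
  -- lift hDA, hDB to equalities in the defect space
  have hdA : ∀ h : H, toDef P (A h)
      = F₁ (toDef P h) + adjoint F₂ (toDef P (P h)) := by
    intro h
    apply Subtype.ext
    simpa [toDef] using hDA h
  have hdB : ∀ h : H, toDef P (B h)
      = F₂ (toDef P h) + adjoint F₁ (toDef P (P h)) := by
    intro h
    apply Subtype.ext
    simpa [toDef] using hDB h
  -- the key pointwise identity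
  have key : ∀ h : H,
      F₁ (adjoint F₁ (toDef P (P h))) + adjoint F₂ (F₂ (toDef P (P h)))
        = F₂ (adjoint F₂ (toDef P (P h))) + adjoint F₁ (F₁ (toDef P (P h))) := by
    intro h
    have e1 : toDef P (A (B h))
        = F₁ (F₂ (toDef P h)) + F₁ (adjoint F₁ (toDef P (P h)))
          + (adjoint F₂ (F₂ (toDef P (P h)))
            + adjoint F₂ (adjoint F₁ (toDef P (P (P h))))) := by
      rw [hdA (B h), hdB h, ← hBPp h, hdB (P h), map_add, map_add]
    have e2 : toDef P (B (A h))
        = F₂ (F₁ (toDef P h)) + F₂ (adjoint F₂ (toDef P (P h)))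
          + (adjoint F₁ (F₁ (toDef P (P h)))
            + adjoint F₁ (adjoint F₂ (toDef P (P (P h))))) := by
      have hAPp : A (P h) = P (A h) := DFunLike.congr_fun hAP h
      rw [hdB (A h), hdA h, ← hAPp, hdA (P h), map_add, map_add]
    have e3 : toDef P (A (B h)) = toDef P (B (A h)) := by rw [hABp h]
    rw [e1, e2, hcp, hcadj] at e3
    simp only [add_assoc] at e3
    have e4 := add_left_cancel e3
    simp only [← add_assoc] at e4
    exact add_right_cancel e4
  -- density of {D_P (P h)} in the defect space
  have hdense2 : DenseRange (fun h : H => toDef P (P h)) := by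
    rw [DenseRange, Topology.IsInducing.subtypeVal.dense_iff]
    intro x
    have hx : (x : H) ∈ closure (Set.range (defectOp P)) := x.2
    have hsub : Set.range (defectOp P)
        ⊆ closure (Set.range (fun h : H => defectOp P (P h))) := by
      rintro _ ⟨h, rfl⟩
      have hmt : Set.MapsTo (defectOp P) (Set.range ⇑P)
          (Set.range (fun h : H => defectOp P (P h))) := by
        rintro _ ⟨k, rfl⟩
        exact ⟨k, rfl⟩
      exact map_mem_closure (defectOp P).continuous (hdense h)
        hmt
    have hx2 : (x : H) ∈ closure (Set.range (fun h : H => defectOp P (P h))) :=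
      closure_minimal hsub isClosed_closure hx
    refine closure_mono ?_ hx2
    rintro _ ⟨h, rfl⟩
    exact ⟨toDef P (P h), Set.mem_range_self h, rfl⟩
  -- conclude by the dense-range equalizer
  ext x
  have hfun : (fun y : defectSp P => F₁ (adjoint F₁ y) - adjoint F₁ (F₁ y))
      = fun y => F₂ (adjoint F₂ y) - adjoint F₂ (F₂ y) := by
    refine hdense2.equalizer ?_ ?_ (funext fun h => ?_)
    · exact ((F₁.comp (adjoint F₁)).continuous).sub (((adjoint F₁).comp F₁).continuous)
    · exact ((F₂.comp (adjoint F₂)).continuous).sub (((adjoint F₂).comp F₂).continuous)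
    · simp only [Function.comp]
      rw [sub_eq_sub_iff_add_eq_add]
      exact key h
  have h2 : F₁ (adjoint F₁ x) - adjoint F₁ (F₁ x)
      = F₂ (adjoint F₂ x) - adjoint F₂ (F₂ x) := congrFun hfun x
  exact_mod_cast congrArg Subtype.val h2
end

section
/- Let (A,B,P), F_1, F_2, G_1, G_2 be as in the context. Assume the identity AA* − BB* = D_{P*} (G_1*G_1 − G_2*G_2) D_{P*} (which holds for any tetrablock contraction (A*,B*,P*) whose fundamental operators commute), assume [F_1, F_2] = 0, and assume P has dense range. Then [G_1, G_1*] = [G_2, G_2*] as operators on 𝒟_{P*}. -/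
open ContinuousLinearMap

variable {H : Type*} [NormedAddCommGroup H] [InnerProductSpace ℂ H] [CompleteSpace H]

set_option synthInstance.maxHeartbeats 1000000
set_option maxHeartbeats 8000000


open Polynomial
namespace St5

lemma defect_nonneg (P : H →L[ℂ] H) (hP : ‖P‖ ≤ 1) : (0:H→L[ℂ]H) ≤ 1 - adjoint P ∘L P := by
  rw [ContinuousLinearMap.nonneg_iff_isPositive, isPositive_def']
  constructor
  · have : IsSelfAdjoint (star P * P) := IsSelfAdjoint.star_mul_self P
    exact (IsSelfAdjoint.one _).sub this
  · intro x
    simp only [reApplyInnerSelf, sub_apply, one_apply, comp_apply, inner_sub_left]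
    rw [adjoint_inner_left]
    simp only [map_sub]
    have h1 : RCLike.re (inner ℂ x x : ℂ) = ‖x‖^2 := by rw [@inner_self_eq_norm_sq ℂ]
    have h2 : RCLike.re (inner ℂ (P x) (P x) : ℂ) = ‖P x‖^2 := by rw [@inner_self_eq_norm_sq ℂ]
    rw [show (1 : H →L[ℂ] H) x = x from rfl, h1, h2]
    nlinarith [norm_nonneg (P x), norm_nonneg x, P.le_opNorm x,
      mul_le_mul_of_nonneg_right hP (norm_nonneg x)]

lemma defect_le_one (P : H →L[ℂ] H) : 1 - adjoint P ∘L P ≤ (1:H→L[ℂ]H) := by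
  rw [ContinuousLinearMap.le_def, isPositive_def']
  have : (1:H→L[ℂ]H) - (1 - adjoint P ∘L P) = adjoint P ∘L P := by
    simp [sub_sub_cancel]
  rw [this]
  constructor
  · exact IsSelfAdjoint.star_mul_self P
  · intro x
    simp only [reApplyInnerSelf, comp_apply]
    rw [adjoint_inner_left]
    have : RCLike.re (inner ℂ (P x) (P x) : ℂ) = ‖P x‖^2 := by rw [@inner_self_eq_norm_sq ℂ]
    rw [this]
    positivity

lemma defectOp_sa (P : H →L[ℂ] H) : IsSelfAdjoint (defectOp P) :=
  IsSelfAdjoint.of_nonneg (CFC.sqrt_nonneg _)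

lemma symD (P : H →L[ℂ] H) (x y : H) :
    (inner ℂ (defectOp P x) y : ℂ) = inner ℂ x (defectOp P y) :=
  ((ContinuousLinearMap.isSelfAdjoint_iff_isSymmetric).mp (defectOp_sa P)) x y

lemma defectOp_sq (P : H →L[ℂ] H) (hP : ‖P‖ ≤ 1) (x : H) :
    defectOp P (defectOp P x) = x - adjoint P (P x) := by
  have h := CFC.sqrt_mul_sqrt_self _ (defect_nonneg P hP)
  have := DFunLike.congr_fun h x
  simpa [defectOp, ContinuousLinearMap.mul_apply] using this

lemma innerD (P : H →L[ℂ] H) (hP : ‖P‖ ≤ 1) (x y : H) :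
    (inner ℂ (defectOp P x) (defectOp P y) : ℂ) = inner ℂ x y - inner ℂ (P x) (P y) := by
  rw [symD, defectOp_sq P hP, inner_sub_right, adjoint_inner_right]

lemma zeroD (P : H →L[ℂ] H) (v : H) (hv : v ∈ defectSp P) (h0 : defectOp P v = 0) : v = 0 := by
  have horth : ∀ w ∈ (LinearMap.range (defectOp P : H →ₗ[ℂ] H) : Set H), (inner ℂ v w : ℂ) = 0 := by
    rintro w ⟨x, rfl⟩
    rw [ContinuousLinearMap.coe_coe, ← symD, h0, inner_zero_left]
  have hcl : v ∈ closure (LinearMap.range (defectOp P : H →ₗ[ℂ] H) : Set H) := by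
    have : v ∈ ((LinearMap.range (defectOp P : H →ₗ[ℂ] H)).topologicalClosure : Set H) := hv
    rwa [Submodule.topologicalClosure_coe] at this
  have hvv : (inner ℂ v v : ℂ) = 0 := by
    have hset : closure (LinearMap.range (defectOp P : H →ₗ[ℂ] H) : Set H) ⊆ {w | (inner ℂ v w : ℂ) = 0} := by
      refine closure_minimal horth ?_
      have : {w | (inner ℂ v w : ℂ) = 0} = (fun w => (inner ℂ v w : ℂ)) ⁻¹' {0} := rfl
      rw [this]
      exact IsClosed.preimage (continuous_const.inner continuous_id) isClosed_singleton
    exact hset hcl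
  exact inner_self_eq_zero.mp hvv

lemma aeval_intertwine (p a b : H →L[ℂ] H) (h : p * a = b * p) (q : Polynomial ℝ) :
    p * Polynomial.aeval a q = Polynomial.aeval b q * p := by
  have hpow : ∀ n : ℕ, p * a ^ n = b ^ n * p := by
    intro n
    induction n with
    | zero => simp
    | succ n ih => rw [pow_succ, ← mul_assoc, ih, mul_assoc, h, pow_succ, mul_assoc]
  induction q using Polynomial.induction_on with
  | C r => simp [Algebra.commutes]
  | add q₁ q₂ h₁ h₂ => simp [mul_add, add_mul, h₁, h₂]
  | monomial n r ih =>
      simp only [map_mul, aeval_C, map_pow, aeval_X]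
      calc p * (algebraMap ℝ _ r * a ^ (n+1))
          = algebraMap ℝ _ r * (p * a ^ (n+1)) := by
            rw [← mul_assoc, ← Algebra.commutes r p, mul_assoc]
        _ = algebraMap ℝ _ r * (b ^ (n+1) * p) := by rw [hpow]
        _ = algebraMap ℝ _ r * b ^ (n+1) * p := by rw [mul_assoc]

lemma sqrt_eq_cfc_real (a : H →L[ℂ] H) (ha : 0 ≤ a) : CFC.sqrt a = cfc Real.sqrt a := by
  refine CFC.sqrt_unique ?_ ?_
  · rw [← cfc_mul ..]
    have : (spectrum ℝ a).EqOn (fun x => Real.sqrt x * Real.sqrt x) id := fun x hx =>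
      Real.mul_self_sqrt (spectrum_nonneg_of_nonneg ha hx)
    rw [cfc_congr this, cfc_id ℝ a]
  · exact cfc_nonneg fun x hx => Real.sqrt_nonneg x

lemma sqrt_intertwine [Nontrivial H] (p a b : H →L[ℂ] H) (ha : 0 ≤ a) (hb : 0 ≤ b) (ha1 : a ≤ 1) (hb1 : b ≤ 1)
    (h : p * a = b * p) : p * CFC.sqrt a = CFC.sqrt b * p := by
  have hsa : IsSelfAdjoint a := IsSelfAdjoint.of_nonneg ha
  have hsb : IsSelfAdjoint b := IsSelfAdjoint.of_nonneg hb
  have hna : ‖a‖ ≤ 1 := (CStarAlgebra.norm_le_one_iff_of_nonneg a ha).2 ha1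
  have hnb : ‖b‖ ≤ 1 := (CStarAlgebra.norm_le_one_iff_of_nonneg b hb).2 hb1
  have spec_a : spectrum ℝ a ⊆ Set.Icc (0:ℝ) 1 := by
    intro x hx
    refine ⟨spectrum_nonneg_of_nonneg ha hx, ?_⟩
    have h1 := spectrum.norm_le_norm_of_mem hx
    have : |x| ≤ 1 := le_trans h1 hna
    linarith [abs_le.1 this |>.2]
  have spec_b : spectrum ℝ b ⊆ Set.Icc (0:ℝ) 1 := by
    intro x hx
    refine ⟨spectrum_nonneg_of_nonneg hb hx, ?_⟩
    have h1 := spectrum.norm_le_norm_of_mem hx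
    have : |x| ≤ 1 := le_trans h1 hnb
    linarith [abs_le.1 this |>.2]
  set π : ℝ → Set.Icc (0:ℝ) 1 := Set.projIcc 0 1 zero_le_one with hπ
  have contπ : Continuous π := continuous_projIcc
  -- the two evaluation maps
  have contΨ : ∀ c : H →L[ℂ] H, IsSelfAdjoint c →
      Continuous (fun g : C(Set.Icc (0:ℝ) 1, ℝ) => cfc (fun x => g (π x)) c) := by
    intro c hc
    rw [Metric.continuous_iff]
    intro g ε hε
    refine ⟨ε, hε, fun g' hg' => ?_⟩
    have hsub : cfc (fun x => g' (π x)) c - cfc (fun x => g (π x)) c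
        = cfc (fun x => g' (π x) - g (π x)) c := by
      rw [cfc_sub _ _ c (by fun_prop) (by fun_prop)]
    rw [dist_eq_norm, hsub]
    calc ‖cfc (fun x => g' (π x) - g (π x)) c‖ ≤ dist g' g := by
            refine norm_cfc_le dist_nonneg fun x hx => ?_
            calc ‖g' (π x) - g (π x)‖ = ‖(g' - g) (π x)‖ := by simp
              _ ≤ ‖g' - g‖ := ContinuousMap.norm_coe_le_norm _ _
              _ = dist g' g := (dist_eq_norm g' g).symm
      _ < ε := hg'
  set SS : Set C(Set.Icc (0:ℝ) 1, ℝ) :=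
    {g | p * cfc (fun x => g (π x)) a = cfc (fun x => g (π x)) b * p} with hSS
  have hclosed : IsClosed SS := by
    have : SS = (fun g : C(Set.Icc (0:ℝ) 1, ℝ) =>
        p * cfc (fun x => g (π x)) a - cfc (fun x => g (π x)) b * p) ⁻¹' {0} := by
      ext g; simp [hSS, sub_eq_zero]
    rw [this]
    exact IsClosed.preimage (((continuous_const.mul (contΨ a hsa)).sub
      ((contΨ b hsb).mul continuous_const))) isClosed_singleton
  have hpoly : (polynomialFunctions (Set.Icc (0:ℝ) 1) : Set C(Set.Icc (0:ℝ) 1, ℝ)) ⊆ SS := by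
    rintro g hg
    rw [polynomialFunctions_coe] at hg
    obtain ⟨q, rfl⟩ := hg
    have key : ∀ (c : H →L[ℂ] H), IsSelfAdjoint c → spectrum ℝ c ⊆ Set.Icc (0:ℝ) 1 →
        cfc (fun x => (Polynomial.toContinuousMapOnAlgHom (Set.Icc (0:ℝ) 1) q) (π x)) c
          = Polynomial.aeval c q := by
      intro c hc hspec
      rw [← cfc_polynomial q c hc]
      refine cfc_congr fun x hx => ?_
      have : π x = ⟨x, hspec hx⟩ := Set.projIcc_of_mem _ (hspec hx)
      simp [this]
    simp only [hSS, Set.mem_setOf_eq, key a hsa spec_a, key b hsb spec_b]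
    exact aeval_intertwine p a b h q
  have huniv : ∀ g, g ∈ SS := by
    intro g
    have hmem := continuousMap_mem_polynomialFunctions_closure 0 1 g
    have hmem' : g ∈ (((polynomialFunctions (Set.Icc (0:ℝ) 1)).topologicalClosure : Subalgebra ℝ C(Set.Icc (0:ℝ) 1, ℝ)) : Set C(Set.Icc (0:ℝ) 1, ℝ)) := hmem
    rw [Subalgebra.topologicalClosure_coe] at hmem'
    exact closure_minimal hpoly hclosed hmem'
  have := huniv ⟨fun t => Real.sqrt t, Real.continuous_sqrt.comp continuous_subtype_val⟩
  simp only [hSS, Set.mem_setOf_eq, ContinuousMap.coe_mk] at this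
  have ca : cfc (fun x => Real.sqrt (π x : ℝ)) a = cfc Real.sqrt a := by
    refine cfc_congr fun x hx => ?_
    have hp : π x = ⟨x, spec_a hx⟩ := Set.projIcc_of_mem _ (spec_a hx)
    rw [hp]
  have cb : cfc (fun x => Real.sqrt (π x : ℝ)) b = cfc Real.sqrt b := by
    refine cfc_congr fun x hx => ?_
    have hp : π x = ⟨x, spec_b hx⟩ := Set.projIcc_of_mem _ (spec_b hx)
    rw [hp]
  rw [ca, cb] at this
  rw [sqrt_eq_cfc_real a ha, sqrt_eq_cfc_real b hb]
  exact this

lemma intertwineP [Nontrivial H] (P : H →L[ℂ] H) (hP : ‖P‖ ≤ 1) (x : H) :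
    defectOp (adjoint P) (P x) = P (defectOp P x) := by
  have hP' : ‖adjoint P‖ ≤ 1 := by
    rw [LinearIsometryEquiv.norm_map adjoint P]; exact hP
  have hb : defectOp (adjoint P) = CFC.sqrt (1 - P ∘L adjoint P) := by
    unfold defectOp; rw [adjoint_adjoint]
  have hnb : (0:H→L[ℂ]H) ≤ 1 - P ∘L adjoint P := by
    have := defect_nonneg (adjoint P) hP'
    rwa [adjoint_adjoint] at this
  have hlb : 1 - P ∘L adjoint P ≤ (1:H→L[ℂ]H) := by
    have := defect_le_one (adjoint P)
    rwa [adjoint_adjoint] at this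
  have hmul : P * (1 - adjoint P ∘L P) = (1 - P ∘L adjoint P) * P := by
    have : P * (1 - adjoint P ∘L P) = P - P * (adjoint P * P) := by
      rw [mul_sub, mul_one]; rfl
    rw [this, ← mul_assoc, sub_mul, one_mul]
    rfl
  have key := sqrt_intertwine P (1 - adjoint P ∘L P) (1 - P ∘L adjoint P)
    (defect_nonneg P hP) hnb (defect_le_one P) hlb hmul
  have : P * defectOp P = defectOp (adjoint P) * P := by
    rw [hb]; exact key
  exact (DFunLike.congr_fun this x).symm

lemma memPD [Nontrivial H] (P : H →L[ℂ] H) (hP : ‖P‖ ≤ 1) (v : H) (hv : v ∈ defectSp P) :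
    P v ∈ defectSp (adjoint P) := by
  have hcl : v ∈ closure (LinearMap.range (defectOp P : H →ₗ[ℂ] H) : Set H) := by
    have : v ∈ ((LinearMap.range (defectOp P : H →ₗ[ℂ] H)).topologicalClosure : Set H) := hv
    rwa [Submodule.topologicalClosure_coe] at this
  have hsub : closure (LinearMap.range (defectOp P : H →ₗ[ℂ] H) : Set H)
      ⊆ P ⁻¹' (defectSp (adjoint P) : Set H) := by
    refine closure_minimal ?_ (IsClosed.preimage P.continuous ?_)
    · rintro w ⟨x, rfl⟩
      show P (defectOp P x) ∈ defectSp (adjoint P)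
      rw [← intertwineP P hP x]
      exact (LinearMap.range (defectOp (adjoint P) : H →ₗ[ℂ] H)).le_topologicalClosure
        (LinearMap.mem_range_self _ (P x))
    · exact Submodule.isClosed_topologicalClosure _
  exact hsub hcl

lemma continuous_toDef (P : H →L[ℂ] H) : Continuous (toDef P) :=
  Continuous.subtype_mk (defectOp P).continuous _

lemma dense_toDef (P : H →L[ℂ] H) : DenseRange (toDef P) := by
  intro v
  rw [closure_subtype]
  have himg : (Subtype.val '' Set.range (toDef P)) = (LinearMap.range (defectOp P : H →ₗ[ℂ] H) : Set H) := by
    ext w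
    constructor
    · rintro ⟨u, ⟨x, rfl⟩, rfl⟩
      exact ⟨x, rfl⟩
    · rintro ⟨x, rfl⟩
      exact ⟨toDef P x, ⟨x, rfl⟩, rfl⟩
  rw [himg]
  have : (v : H) ∈ ((LinearMap.range (defectOp P : H →ₗ[ℂ] H)).topologicalClosure : Set H) := v.2
  rwa [Submodule.topologicalClosure_coe] at this

lemma adj_rel (P X Y : H →L[ℂ] H) (F : defectSp P →L[ℂ] defectSp P)
    (hXY : ∀ h : H, X h - adjoint Y (P h) = defectOp P (F (toDef P h) : H)) (g : H) :
    defectOp P ((adjoint F (toDef P g) : H)) = adjoint X g - adjoint P (Y g) := by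
  apply ext_inner_right ℂ
  intro k
  rw [symD]
  have e1 : (inner ℂ ((adjoint F (toDef P g) : H)) (defectOp P k) : ℂ)
      = inner ℂ (adjoint F (toDef P g)) (toDef P k) := by
    rw [Submodule.coe_inner]; rfl
  rw [e1, adjoint_inner_left]
  have e2 : (inner ℂ (toDef P g) (F (toDef P k)) : ℂ)
      = inner ℂ (defectOp P g) ((F (toDef P k) : H)) := by
    rw [Submodule.coe_inner]; rfl
  rw [e2, symD, ← hXY k, inner_sub_right, inner_sub_left]
  rw [← adjoint_inner_left X, adjoint_inner_right, ← adjoint_inner_left P]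

lemma relAB (P A B : H →L[ℂ] H) (hP : ‖P‖ ≤ 1) (hAP : A ∘L P = P ∘L A)
    (F₁ F₂ : defectSp P →L[ℂ] defectSp P)
    (hF₁ : ∀ h : H, A h - adjoint B (P h) = defectOp P (F₁ (toDef P h) : H))
    (hF₂ : ∀ h : H, B h - adjoint A (P h) = defectOp P (F₂ (toDef P h) : H)) (h : H) :
    toDef P (A h) = F₁ (toDef P h) + adjoint F₂ (toDef P (P h)) := by
  have hv : (toDef P (A h) : H) - ((F₁ (toDef P h) + adjoint F₂ (toDef P (P h)) : defectSp P) : H)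
      = 0 := by
    set v := (toDef P (A h) : H) - ((F₁ (toDef P h) + adjoint F₂ (toDef P (P h)) : defectSp P) : H)
      with hvdef
    have hmem : v ∈ defectSp P := by
      apply Submodule.sub_mem
      · exact (toDef P (A h)).2
      · exact (F₁ (toDef P h) + adjoint F₂ (toDef P (P h))).2
    have hD : defectOp P v = 0 := by
      have hc : ((F₁ (toDef P h) + adjoint F₂ (toDef P (P h)) : defectSp P) : H)
          = (F₁ (toDef P h) : H) + (adjoint F₂ (toDef P (P h)) : H) := rfl
      rw [hvdef, hc, map_sub, map_add]
      have h1 : defectOp P ((toDef P (A h)) : H) = A h - adjoint P (P (A h)) := by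
        show defectOp P (defectOp P (A h)) = _
        rw [defectOp_sq P hP]
      have h2 : defectOp P ((F₁ (toDef P h)) : H) = A h - adjoint B (P h) := (hF₁ h).symm
      have h3 : defectOp P ((adjoint F₂ (toDef P (P h)) : H))
          = adjoint B (P h) - adjoint P (A (P h)) := adj_rel P B A F₂ hF₂ (P h)
      rw [h1, h2, h3]
      have : A (P h) = P (A h) := DFunLike.congr_fun hAP h
      rw [this]
      abel
    exact zeroD P v hmem hD
  have := sub_eq_zero.mp hv
  exact Subtype.ext this

lemma relG [Nontrivial H] (P A B : H →L[ℂ] H) (hP : ‖P‖ ≤ 1) (hAP : A ∘L P = P ∘L A)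
    (F₁ : defectSp P →L[ℂ] defectSp P)
    (G₁ : defectSp (adjoint P) →L[ℂ] defectSp (adjoint P))
    (hF₁ : ∀ h : H, A h - adjoint B (P h) = defectOp P (F₁ (toDef P h) : H))
    (hG₁ : ∀ h : H, adjoint A h - B (adjoint P h)
      = defectOp (adjoint P) (G₁ (toDef (adjoint P) h) : H)) (h : H) :
    ((adjoint G₁ (toDef (adjoint P) (P h)) : H)) = P ((F₁ (toDef P h) : H)) := by
  have hP' : ‖adjoint P‖ ≤ 1 := by
    rw [LinearIsometryEquiv.norm_map adjoint P]; exact hP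
  have hG₁' : ∀ h : H, adjoint A h - adjoint (adjoint B) (adjoint P h)
      = defectOp (adjoint P) (G₁ (toDef (adjoint P) h) : H) := by
    intro g; rw [adjoint_adjoint]; exact hG₁ g
  have key := adj_rel (adjoint P) (adjoint A) (adjoint B) G₁ hG₁' (P h)
  rw [adjoint_adjoint, adjoint_adjoint] at key
  -- key : E ↑(G₁* (S (P h))) = A (P h) - P (B* (P h))
  have hv : ((adjoint G₁ (toDef (adjoint P) (P h)) : H)) - P ((F₁ (toDef P h) : H)) = 0 := by
    set w := ((adjoint G₁ (toDef (adjoint P) (P h)) : H)) - P ((F₁ (toDef P h) : H)) with hw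
    have hmem : w ∈ defectSp (adjoint P) := by
      apply Submodule.sub_mem
      · exact (adjoint G₁ (toDef (adjoint P) (P h))).2
      · exact memPD P hP _ (F₁ (toDef P h)).2
    have hD : defectOp (adjoint P) w = 0 := by
      rw [hw, map_sub, key]
      rw [intertwineP P hP]
      rw [← hF₁ h]
      have : A (P h) = P (A h) := DFunLike.congr_fun hAP h
      rw [this, map_sub]
      abel
    exact zeroD (adjoint P) w hmem hD
  exact sub_eq_zero.mp hv

end St5

/-- Theorem 2.6(iii): if `AA* − BB* = D_{P*}(G₁*G₁ − G₂*G₂)D_{P*}`, the fundamental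
operators `F₁, F₂` of `(A,B,P)` commute and `P` has dense range, then
`[G₁, G₁*] = [G₂, G₂*]`. -/
theorem statement5
    (A B P : H →L[ℂ] H)
    (hAB : A ∘L B = B ∘L A) (hAP : A ∘L P = P ∘L A) (hBP : B ∘L P = P ∘L B)
    (hP : ‖P‖ ≤ 1)
    (F₁ F₂ : defectSp P →L[ℂ] defectSp P)
    (G₁ G₂ : defectSp (adjoint P) →L[ℂ] defectSp (adjoint P))
    (hF₁ : ∀ h : H, A h - adjoint B (P h) = defectOp P (F₁ (toDef P h) : H))
    (hF₂ : ∀ h : H, B h - adjoint A (P h) = defectOp P (F₂ (toDef P h) : H))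
    (hG₁ : ∀ h : H, adjoint A h - B (adjoint P h)
      = defectOp (adjoint P) (G₁ (toDef (adjoint P) h) : H))
    (hG₂ : ∀ h : H, adjoint B h - A (adjoint P h)
      = defectOp (adjoint P) (G₂ (toDef (adjoint P) h) : H))
    (hlem : ∀ h : H, A (adjoint A h) - B (adjoint B h)
      = defectOp (adjoint P) ((adjoint G₁ (G₁ (toDef (adjoint P) h)) : H)
          - (adjoint G₂ (G₂ (toDef (adjoint P) h)) : H)))
    (hcomm : F₁ ∘L F₂ = F₂ ∘L F₁)
    (hdense : DenseRange (P : H → H)) :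
    G₁ ∘L adjoint G₁ - adjoint G₁ ∘L G₁ = G₂ ∘L adjoint G₂ - adjoint G₂ ∘L G₂ := by
  rcases subsingleton_or_nontrivial H with hsub | hnt
  · haveI : Subsingleton (defectSp (adjoint P)) :=
      ⟨fun a b => Subtype.ext (Subsingleton.elim _ _)⟩
    ext u
    exact Subsingleton.elim _ _
  -- nontrivial case
  have hAPp : ∀ x, A (P x) = P (A x) := fun x => DFunLike.congr_fun hAP x
  have hBPp : ∀ x, B (P x) = P (B x) := fun x => DFunLike.congr_fun hBP x
  have hABp : ∀ x, A (B x) = B (A x) := fun x => DFunLike.congr_fun hAB x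
  have hcommp : ∀ u, F₁ (F₂ u) = F₂ (F₁ u) := fun u => DFunLike.congr_fun hcomm u
  have relA : ∀ h, toDef P (A h) = F₁ (toDef P h) + adjoint F₂ (toDef P (P h)) :=
    St5.relAB P A B hP hAP F₁ F₂ hF₁ hF₂
  have relB : ∀ h, toDef P (B h) = F₂ (toDef P h) + adjoint F₁ (toDef P (P h)) :=
    St5.relAB P B A hP hBP F₂ F₁ hF₂ hF₁
  have relG₁ : ∀ h, ((adjoint G₁ (toDef (adjoint P) (P h)) : H)) = P ((F₁ (toDef P h) : H)) :=
    St5.relG P A B hP hAP F₁ G₁ hF₁ hG₁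
  have relG₂ : ∀ h, ((adjoint G₂ (toDef (adjoint P) (P h)) : H)) = P ((F₂ (toDef P h) : H)) :=
    St5.relG P B A hP hBP F₂ G₂ hF₂ hG₂
  -- inner ℂ product helpers
  have iT : ∀ (u : defectSp P) (x : H),
      (inner ℂ u (toDef P x) : ℂ) = inner ℂ (u : H) (defectOp P x) := fun u x => rfl
  have iTl : ∀ (u : defectSp P) (x : H),
      (inner ℂ (toDef P x) u : ℂ) = inner ℂ (defectOp P x) (u : H) := fun u x => rfl
  have hDF₁ : ∀ h, defectOp P ((F₁ (toDef P h) : H)) = A h - adjoint B (P h) :=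
    fun h => (hF₁ h).symm
  have hDF₂ : ∀ h, defectOp P ((F₂ (toDef P h) : H)) = B h - adjoint A (P h) :=
    fun h => (hF₂ h).symm
  -- ⟪T x, F (T y)⟫ style reductions
  have redF₁ : ∀ x y, (inner ℂ (toDef P x) (F₁ (toDef P y)) : ℂ)
      = inner ℂ x (A y - adjoint B (P y)) := by
    intro x y
    rw [iTl, St5.symD, hDF₁]
  have redF₂ : ∀ x y, (inner ℂ (toDef P x) (F₂ (toDef P y)) : ℂ)
      = inner ℂ x (B y - adjoint A (P y)) := by
    intro x y
    rw [iTl, St5.symD, hDF₂]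
  have redF₁' : ∀ x y, (inner ℂ (F₁ (toDef P x)) (toDef P y) : ℂ)
      = inner ℂ (A x - adjoint B (P x)) y := by
    intro x y
    rw [iT, ← St5.symD, hDF₁]
  have redF₂' : ∀ x y, (inner ℂ (F₂ (toDef P x)) (toDef P y) : ℂ)
      = inner ℂ (B x - adjoint A (P x)) y := by
    intro x y
    rw [iT, ← St5.symD, hDF₂]
  have iTT : ∀ x y : H, (inner ℂ (toDef P x) (toDef P y) : ℂ) = inner ℂ x y - inner ℂ (P x) (P y) := by
    intro x y
    rw [Submodule.coe_inner]
    exact St5.innerD P hP x y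
  -- Step 1: expansion identities
  have expandA : ∀ h k : H, (inner ℂ (A h) (A k) : ℂ) - inner ℂ (P (A h)) (P (A k))
      = inner ℂ (F₁ (toDef P h)) (F₁ (toDef P k))
        + inner ℂ (F₂ (F₁ (toDef P h))) (toDef P (P k))
        + inner ℂ (toDef P (P h)) (F₂ (F₁ (toDef P k)))
        + inner ℂ (adjoint F₂ (toDef P (P h))) (adjoint F₂ (toDef P (P k))) := by
    intro h k
    have e := iTT (A h) (A k)
    rw [relA h, relA k, inner_add_left, inner_add_right, inner_add_right,
      adjoint_inner_right, adjoint_inner_left] at e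
    linear_combination -e
  have expandB : ∀ h k : H, (inner ℂ (B h) (B k) : ℂ) - inner ℂ (P (B h)) (P (B k))
      = inner ℂ (F₂ (toDef P h)) (F₂ (toDef P k))
        + inner ℂ (F₂ (F₁ (toDef P h))) (toDef P (P k))
        + inner ℂ (toDef P (P h)) (F₂ (F₁ (toDef P k)))
        + inner ℂ (adjoint F₁ (toDef P (P h))) (adjoint F₁ (toDef P (P k))) := by
    intro h k
    have e := iTT (B h) (B k)
    rw [relB h, relB k, inner_add_left, inner_add_right, inner_add_right,
      adjoint_inner_right, adjoint_inner_left, hcommp (toDef P h), hcommp (toDef P k)] at e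
    linear_combination -e
  -- Step 2: the vector identity
  have vecid : ∀ h : H, F₁ (adjoint F₁ (toDef P (P h))) - F₂ (adjoint F₂ (toDef P (P h)))
      = adjoint F₁ (toDef P (P (A h))) - adjoint F₂ (toDef P (P (B h))) := by
    intro h
    have h1 : adjoint F₁ (toDef P (P h)) = toDef P (B h) - F₂ (toDef P h) := by
      rw [relB h]; abel
    have h2 : adjoint F₂ (toDef P (P h)) = toDef P (A h) - F₁ (toDef P h) := by
      rw [relA h]; abel
    have h3 : F₁ (toDef P (B h)) = toDef P (A (B h)) - adjoint F₂ (toDef P (P (B h))) := by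
      rw [relA (B h)]; abel
    have h4 : F₂ (toDef P (A h)) = toDef P (B (A h)) - adjoint F₁ (toDef P (P (A h))) := by
      rw [relB (A h)]; abel
    rw [h1, h2, map_sub, map_sub, h3, h4, hABp h, hcommp (toDef P h)]
    abel
  -- Step 3: the dagger identity
  have dag : ∀ h k : H, (inner ℂ (adjoint F₁ (toDef P (P h))) (adjoint F₁ (toDef P (P k))) : ℂ)
      - inner ℂ (adjoint F₂ (toDef P (P h))) (adjoint F₂ (toDef P (P k)))
      = inner ℂ (P (A h)) (P (A k)) - inner ℂ (P (B h)) (P (B k)) := by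
    intro h k
    have s1 : (inner ℂ (adjoint F₁ (toDef P (P h))) (adjoint F₁ (toDef P (P k))) : ℂ)
        = inner ℂ (F₁ (adjoint F₁ (toDef P (P h)))) (toDef P (P k)) :=
      adjoint_inner_right F₁ _ _
    have s2 : (inner ℂ (adjoint F₂ (toDef P (P h))) (adjoint F₂ (toDef P (P k))) : ℂ)
        = inner ℂ (F₂ (adjoint F₂ (toDef P (P h)))) (toDef P (P k)) :=
      adjoint_inner_right F₂ _ _
    have s3 : (inner ℂ (F₁ (adjoint F₁ (toDef P (P h)))) (toDef P (P k)) : ℂ)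
        - inner ℂ (F₂ (adjoint F₂ (toDef P (P h)))) (toDef P (P k))
        = inner ℂ (adjoint F₁ (toDef P (P (A h)))) (toDef P (P k))
          - inner ℂ (adjoint F₂ (toDef P (P (B h)))) (toDef P (P k)) := by
      rw [← inner_sub_left, ← inner_sub_left, vecid h]
    have t1 : (inner ℂ (adjoint F₁ (toDef P (P (A h)))) (toDef P (P k)) : ℂ)
        = inner ℂ (P (A h)) (P (A k)) - inner ℂ (B (P (A h))) (P (P k)) := by
      rw [adjoint_inner_left, redF₁, inner_sub_right, hAPp k, adjoint_inner_right]
    have t2 : (inner ℂ (adjoint F₂ (toDef P (P (B h)))) (toDef P (P k)) : ℂ)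
        = inner ℂ (P (B h)) (P (B k)) - inner ℂ (A (P (B h))) (P (P k)) := by
      rw [adjoint_inner_left, redF₂, inner_sub_right, hBPp k, adjoint_inner_right]
    have hx : B (P (A h)) = A (P (B h)) := by
      rw [hBPp (A h), hAPp (B h), hABp h]
    rw [s1, s2] at *
    rw [hx] at t1
    linear_combination s3 + t1 - t2
  -- Step 4: C1
  have C1 : ∀ h k : H, (inner ℂ (F₁ (toDef P h)) (F₁ (toDef P k)) : ℂ)
      - inner ℂ (F₂ (toDef P h)) (F₂ (toDef P k))
      = inner ℂ (A h) (A k) - inner ℂ (B h) (B k) := by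
    intro h k
    linear_combination (expandB h k) - (expandA h k) + (dag h k)
  -- Step 5: C2
  have hSG₁ : ∀ h k : H,
      (inner ℂ (adjoint G₁ (toDef (adjoint P) (P h))) (adjoint G₁ (toDef (adjoint P) (P k))) : ℂ)
      = inner ℂ (F₁ (toDef P h)) (F₁ (toDef P k))
        - inner ℂ (A h - adjoint B (P h)) (A k - adjoint B (P k)) := by
    intro h k
    rw [Submodule.coe_inner, relG₁ h, relG₁ k]
    have hin := St5.innerD P hP ((F₁ (toDef P h)) : H) ((F₁ (toDef P k)) : H)
    rw [hDF₁ h, hDF₁ k] at hin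
    have hco : (inner ℂ ((F₁ (toDef P h)) : H) ((F₁ (toDef P k)) : H) : ℂ)
        = inner ℂ (F₁ (toDef P h)) (F₁ (toDef P k)) := (Submodule.coe_inner _ _ _).symm
    linear_combination hin + hco
  have hSG₂ : ∀ h k : H,
      (inner ℂ (adjoint G₂ (toDef (adjoint P) (P h))) (adjoint G₂ (toDef (adjoint P) (P k))) : ℂ)
      = inner ℂ (F₂ (toDef P h)) (F₂ (toDef P k))
        - inner ℂ (B h - adjoint A (P h)) (B k - adjoint A (P k)) := by
    intro h k
    rw [Submodule.coe_inner, relG₂ h, relG₂ k]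
    have hin := St5.innerD P hP ((F₂ (toDef P h)) : H) ((F₂ (toDef P k)) : H)
    rw [hDF₂ h, hDF₂ k] at hin
    have hco : (inner ℂ ((F₂ (toDef P h)) : H) ((F₂ (toDef P k)) : H) : ℂ)
        = inner ℂ (F₂ (toDef P h)) (F₂ (toDef P k)) := (Submodule.coe_inner _ _ _).symm
    linear_combination hin + hco
  have C2 : ∀ h k : H,
      (inner ℂ (adjoint G₁ (toDef (adjoint P) (P h))) (adjoint G₁ (toDef (adjoint P) (P k))) : ℂ)
      - inner ℂ (adjoint G₂ (toDef (adjoint P) (P h))) (adjoint G₂ (toDef (adjoint P) (P k)))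
      = inner ℂ (adjoint A (P h)) (adjoint A (P k)) - inner ℂ (adjoint B (P h)) (adjoint B (P k)) := by
    intro h k
    rw [hSG₁ h k, hSG₂ h k]
    have x1 : (inner ℂ (A h) (adjoint B (P k)) : ℂ) = inner ℂ (B h) (adjoint A (P k)) := by
      rw [adjoint_inner_right, adjoint_inner_right, hABp h]
    have x2 : (inner ℂ (adjoint B (P h)) (A k) : ℂ) = inner ℂ (adjoint A (P h)) (B k) := by
      rw [adjoint_inner_left, adjoint_inner_left, hABp k]
    simp only [inner_sub_left, inner_sub_right]
    linear_combination (C1 h k) + x1 + x2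
  -- Step 6: extend C2 by density of the range of P
  have contS : Continuous (toDef (adjoint P)) := St5.continuous_toDef (adjoint P)
  have stageA : ∀ k h : H,
      (inner ℂ (adjoint G₁ (toDef (adjoint P) h)) (adjoint G₁ (toDef (adjoint P) (P k))) : ℂ)
      - inner ℂ (adjoint G₂ (toDef (adjoint P) h)) (adjoint G₂ (toDef (adjoint P) (P k)))
      = inner ℂ (adjoint A h) (adjoint A (P k)) - inner ℂ (adjoint B h) (adjoint B (P k)) := by
    intro k
    have hfg : (fun h : H =>
        (inner ℂ (adjoint G₁ (toDef (adjoint P) h)) (adjoint G₁ (toDef (adjoint P) (P k))) : ℂ)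
        - inner ℂ (adjoint G₂ (toDef (adjoint P) h)) (adjoint G₂ (toDef (adjoint P) (P k))))
        = (fun h : H =>
        (inner ℂ (adjoint A h) (adjoint A (P k)) : ℂ) - inner ℂ (adjoint B h) (adjoint B (P k))) := by
      refine hdense.equalizer ?_ ?_ (funext fun h => ?_)
      · exact (((adjoint G₁).continuous.comp contS).inner continuous_const).sub
          (((adjoint G₂).continuous.comp contS).inner continuous_const)
      · exact (((adjoint A).continuous).inner continuous_const).sub
          (((adjoint B).continuous).inner continuous_const)
      · exact C2 h k
    exact fun h => congrFun hfg h
  have beta : ∀ h k : H,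
      (inner ℂ (adjoint G₁ (toDef (adjoint P) h)) (adjoint G₁ (toDef (adjoint P) k)) : ℂ)
      - inner ℂ (adjoint G₂ (toDef (adjoint P) h)) (adjoint G₂ (toDef (adjoint P) k))
      = inner ℂ (adjoint A h) (adjoint A k) - inner ℂ (adjoint B h) (adjoint B k) := by
    intro h
    have hfg : (fun k : H =>
        (inner ℂ (adjoint G₁ (toDef (adjoint P) h)) (adjoint G₁ (toDef (adjoint P) k)) : ℂ)
        - inner ℂ (adjoint G₂ (toDef (adjoint P) h)) (adjoint G₂ (toDef (adjoint P) k)))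
        = (fun k : H =>
        (inner ℂ (adjoint A h) (adjoint A k) : ℂ) - inner ℂ (adjoint B h) (adjoint B k)) := by
      refine hdense.equalizer ?_ ?_ (funext fun k => ?_)
      · exact ((continuous_const.inner ((adjoint G₁).continuous.comp contS))).sub
          ((continuous_const.inner ((adjoint G₂).continuous.comp contS)))
      · exact ((continuous_const.inner (adjoint A).continuous)).sub
          ((continuous_const.inner (adjoint B).continuous))
      · exact stageA k h
    exact fun k => congrFun hfg k
  -- Step 7: alpha from hlem
  have alpha : ∀ h k : H,
      (inner ℂ (G₁ (toDef (adjoint P) h)) (G₁ (toDef (adjoint P) k)) : ℂ)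
      - inner ℂ (G₂ (toDef (adjoint P) h)) (G₂ (toDef (adjoint P) k))
      = inner ℂ (adjoint A h) (adjoint A k) - inner ℂ (adjoint B h) (adjoint B k) := by
    intro h k
    have e : (inner ℂ (A (adjoint A h) - B (adjoint B h)) k : ℂ)
        = inner ℂ (defectOp (adjoint P) ((adjoint G₁ (G₁ (toDef (adjoint P) h)) : H)
          - (adjoint G₂ (G₂ (toDef (adjoint P) h)) : H))) k := by rw [hlem h]
    have L : (inner ℂ (A (adjoint A h) - B (adjoint B h)) k : ℂ)
        = inner ℂ (adjoint A h) (adjoint A k) - inner ℂ (adjoint B h) (adjoint B k) := by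
      rw [inner_sub_left, ← adjoint_inner_right A, ← adjoint_inner_right B]
    have R : (inner ℂ (defectOp (adjoint P) ((adjoint G₁ (G₁ (toDef (adjoint P) h)) : H)
          - (adjoint G₂ (G₂ (toDef (adjoint P) h)) : H))) k : ℂ)
        = inner ℂ (G₁ (toDef (adjoint P) h)) (G₁ (toDef (adjoint P) k))
          - inner ℂ (G₂ (toDef (adjoint P) h)) (G₂ (toDef (adjoint P) k)) := by
      rw [St5.symD, inner_sub_left]
      have r1 : (inner ℂ ((adjoint G₁ (G₁ (toDef (adjoint P) h)) : H))
          (defectOp (adjoint P) k) : ℂ)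
          = inner ℂ (G₁ (toDef (adjoint P) h)) (G₁ (toDef (adjoint P) k)) := by
        have hc : (inner ℂ ((adjoint G₁ (G₁ (toDef (adjoint P) h)) : H))
            ((toDef (adjoint P) k : H)) : ℂ)
            = inner ℂ (adjoint G₁ (G₁ (toDef (adjoint P) h))) (toDef (adjoint P) k) :=
          (Submodule.coe_inner _ _ _).symm
        rw [show defectOp (adjoint P) k = ((toDef (adjoint P) k : H)) from rfl, hc,
          adjoint_inner_left]
      have r2 : (inner ℂ ((adjoint G₂ (G₂ (toDef (adjoint P) h)) : H))
          (defectOp (adjoint P) k) : ℂ)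
          = inner ℂ (G₂ (toDef (adjoint P) h)) (G₂ (toDef (adjoint P) k)) := by
        have hc : (inner ℂ ((adjoint G₂ (G₂ (toDef (adjoint P) h)) : H))
            ((toDef (adjoint P) k : H)) : ℂ)
            = inner ℂ (adjoint G₂ (G₂ (toDef (adjoint P) h))) (toDef (adjoint P) k) :=
          (Submodule.coe_inner _ _ _).symm
        rw [show defectOp (adjoint P) k = ((toDef (adjoint P) k : H)) from rfl, hc,
          adjoint_inner_left]
      rw [r1, r2]
    exact (L.symm.trans (e.trans R)).symm
  -- Step 8: combine and extend to the whole defect space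
  have qS : ∀ h k : H,
      (inner ℂ (adjoint G₁ (toDef (adjoint P) h)) (adjoint G₁ (toDef (adjoint P) k)) : ℂ)
      - inner ℂ (adjoint G₂ (toDef (adjoint P) h)) (adjoint G₂ (toDef (adjoint P) k))
      - inner ℂ (G₁ (toDef (adjoint P) h)) (G₁ (toDef (adjoint P) k))
      + inner ℂ (G₂ (toDef (adjoint P) h)) (G₂ (toDef (adjoint P) k)) = 0 := by
    intro h k
    linear_combination (beta h k) - (alpha h k)
  have hdS : DenseRange (toDef (adjoint P)) := St5.dense_toDef (adjoint P)
  have stage1 : ∀ (k : H) (u : defectSp (adjoint P)),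
      (inner ℂ (adjoint G₁ u) (adjoint G₁ (toDef (adjoint P) k)) : ℂ)
      - inner ℂ (adjoint G₂ u) (adjoint G₂ (toDef (adjoint P) k))
      - inner ℂ (G₁ u) (G₁ (toDef (adjoint P) k))
      + inner ℂ (G₂ u) (G₂ (toDef (adjoint P) k)) = 0 := by
    intro k
    have hfg : (fun u : defectSp (adjoint P) =>
        (inner ℂ (adjoint G₁ u) (adjoint G₁ (toDef (adjoint P) k)) : ℂ)
        - inner ℂ (adjoint G₂ u) (adjoint G₂ (toDef (adjoint P) k))
        - inner ℂ (G₁ u) (G₁ (toDef (adjoint P) k))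
        + inner ℂ (G₂ u) (G₂ (toDef (adjoint P) k)))
        = (fun _ : defectSp (adjoint P) => (0:ℂ)) := by
      refine hdS.equalizer ?_ continuous_const (funext fun h => qS h k)
      exact (((((adjoint G₁).continuous).inner continuous_const).sub
        (((adjoint G₂).continuous).inner continuous_const)).sub
        ((G₁.continuous).inner continuous_const)).add
        ((G₂.continuous).inner continuous_const)
    exact fun u => congrFun hfg u
  have qq : ∀ (u v : defectSp (adjoint P)),
      (inner ℂ (adjoint G₁ u) (adjoint G₁ v) : ℂ)
      - inner ℂ (adjoint G₂ u) (adjoint G₂ v)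
      - inner ℂ (G₁ u) (G₁ v)
      + inner ℂ (G₂ u) (G₂ v) = 0 := by
    intro u
    have hfg : (fun v : defectSp (adjoint P) =>
        (inner ℂ (adjoint G₁ u) (adjoint G₁ v) : ℂ)
        - inner ℂ (adjoint G₂ u) (adjoint G₂ v)
        - inner ℂ (G₁ u) (G₁ v)
        + inner ℂ (G₂ u) (G₂ v))
        = (fun _ : defectSp (adjoint P) => (0:ℂ)) := by
      refine hdS.equalizer ?_ continuous_const (funext fun k => stage1 k u)
      exact ((((continuous_const.inner (adjoint G₁).continuous)).sub
        ((continuous_const.inner (adjoint G₂).continuous))).sub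
        ((continuous_const.inner G₁.continuous))).add
        ((continuous_const.inner G₂.continuous))
    exact fun v => congrFun hfg v
  -- Final step
  refine ContinuousLinearMap.ext fun u => ?_
  refine ext_inner_right ℂ fun v => ?_
  simp only [ContinuousLinearMap.sub_apply, ContinuousLinearMap.comp_apply, inner_sub_left]
  have g1 : (inner ℂ (G₁ (adjoint G₁ u)) v : ℂ) = inner ℂ (adjoint G₁ u) (adjoint G₁ v) :=
    (adjoint_inner_right G₁ _ _).symm
  have g2 : (inner ℂ (adjoint G₁ (G₁ u)) v : ℂ) = inner ℂ (G₁ u) (G₁ v) :=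
    adjoint_inner_left G₁ _ _
  have g3 : (inner ℂ (G₂ (adjoint G₂ u)) v : ℂ) = inner ℂ (adjoint G₂ u) (adjoint G₂ v) :=
    (adjoint_inner_right G₂ _ _).symm
  have g4 : (inner ℂ (adjoint G₂ (G₂ u)) v : ℂ) = inner ℂ (G₂ u) (G₂ v) :=
    adjoint_inner_left G₂ _ _
  rw [g1, g2, g3, g4]
  linear_combination qq u v
end

section
/- Let E be a complex Hilbert space and let X, Y ∈ B(ℓ²(ℕ,E)) be bounded operators that commute with the unilateral shift S and satisfy X = Y* S and Y = X* S. Then there exist unique bounded operators G_1, G_2 ∈ B(E) such that X = Γ(G_1) + S Γ(G_2*) and Y = Γ(G_2) + S Γ(G_1*); equivalently, every such pair is induced by multiplication by the degree-one operator polynomials G_1 + G_2* z and G_2 + G_1* z on H²_E(𝔻). -/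
open ContinuousLinearMap
open scoped ENNReal

noncomputable section ShiftAux

variable {E : Type*} [NormedAddCommGroup E] [InnerProductSpace ℂ E] [CompleteSpace E]

local notation "ℓ²E" => lp (fun _ : ℕ => E) 2
local notation "⟪" x ", " y "⟫" => @inner ℂ _ _ x y

lemma single_self (i : ℕ) (a : E) : (lp.single 2 i a : ℓ²E) i = a :=
  lp.single_apply_self (E := fun _ : ℕ => E) 2 i a

lemma single_ne (i : ℕ) (a : E) {j : ℕ} (h : j ≠ i) : (lp.single 2 i a : ℓ²E) j = 0 :=
  lp.single_apply_ne (E := fun _ : ℕ => E) 2 i a h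

lemma lp_add_apply (a b : ℓ²E) (i : ℕ) : (a + b) i = a i + b i := by
  simp [lp.coeFn_add]

lemma inner_single_left' (i : ℕ) (a : E) (f : ℓ²E) :
    inner ℂ (lp.single 2 i a : ℓ²E) f = inner ℂ a (f i) :=
  @lp.inner_single_left ℕ ℂ _ (fun _ : ℕ => E) _ _ _ i a f

lemma inner_single_right' (i : ℕ) (a : E) (f : ℓ²E) :
    inner ℂ f (lp.single 2 i a : ℓ²E) = inner ℂ (f i) a :=
  @lp.inner_single_right ℕ ℂ _ (fun _ : ℕ => E) _ _ _ i a f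

/-- Evaluation at a coordinate, as a continuous linear map. -/
def evCLM (n : ℕ) : ℓ²E →L[ℂ] E :=
  LinearMap.mkContinuous
    { toFun := fun f => f n
      map_add' := fun f g => by simp [lp.coeFn_add]
      map_smul' := fun c f => by simp [lp.coeFn_smul] }
    1 (fun f => by
      rw [one_mul]; exact lp.norm_apply_le_norm (by norm_num : (2:ℝ≥0∞) ≠ 0) f n)

@[simp] lemma evCLM_apply (n : ℕ) (f : ℓ²E) : evCLM n f = f n := rfl

/-- Inclusion at a coordinate, as a continuous linear map. -/
def sCLM (n : ℕ) : E →L[ℂ] ℓ²E :=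
  LinearMap.mkContinuous
    { toFun := fun v => lp.single 2 n v
      map_add' := fun v w => lp.ext (funext fun j => by
        by_cases h : j = n
        · subst h
          simp [lp_add_apply, single_self]
        · simp [lp_add_apply, single_ne n _ h])
      map_smul' := fun c v => by simpa using lp.single_smul 2 n v c }
    1 (fun v => by
      simpa using (lp.norm_single (p := 2) (by norm_num) (fun _ => v) n).le)

@[simp] lemma sCLM_apply (n : ℕ) (v : E) : sCLM n v = lp.single 2 n v := rfl

lemma singleS (S : ℓ²E →L[ℂ] ℓ²E) (hS : ∀ (f : ℓ²E) (n : ℕ), (S f) n = if n = 0 then 0 else f (n - 1))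
    (n : ℕ) (v : E) : S (lp.single 2 n v) = (lp.single 2 (n+1) v : ℓ²E) := by
  apply lp.ext
  funext j
  rw [hS]
  rcases eq_or_ne j 0 with h0 | h0
  · subst h0
    rw [if_pos rfl, single_ne (n+1) v (by omega : (0:ℕ) ≠ n+1)]
  · rw [if_neg h0]
    rcases eq_or_ne j (n+1) with h1 | h1
    · subst h1
      rw [Nat.add_sub_cancel, single_self, single_self]
    · rw [single_ne n v (by omega : j - 1 ≠ n), single_ne (n+1) v h1]

/-- Column formula: `X` acting on singles. -/
lemma colX (S : ℓ²E →L[ℂ] ℓ²E) (hS : ∀ (f : ℓ²E) (n : ℕ), (S f) n = if n = 0 then 0 else f (n - 1))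
    (X Y : ℓ²E →L[ℂ] ℓ²E)
    (hXS : X ∘L S = S ∘L X) (hYS : Y ∘L S = S ∘L Y)
    (hYX : Y = adjoint X ∘L S) :
    ∀ (k : ℕ) (v : E), X (lp.single 2 k v) =
      lp.single 2 k ((X (lp.single 2 0 v)) 0) +
      lp.single 2 (k+1) ((X (lp.single 2 0 v)) 1) := by
  have hXc : ∀ g, X (S g) = S (X g) := fun g => by
    simpa using DFunLike.congr_fun hXS g
  have hYc : ∀ g, Y (S g) = S (Y g) := fun g => by
    simpa using DFunLike.congr_fun hYS g
  have hYa : ∀ g, Y g = adjoint X (S g) := fun g => by rw [hYX]; rfl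
  -- Y of higher singles vanishes at coordinate 0
  have hY0 : ∀ (n : ℕ) (v : E), (Y (lp.single 2 (n+1) v)) 0 = 0 := by
    intro n v
    rw [← singleS S hS, hYc, hS]
    simp
  -- triangularity of X
  have hXtri : ∀ (w : E) (m : ℕ), (X (lp.single 2 0 w)) (m+2) = 0 := by
    intro w m
    refine ext_inner_left ℂ (fun v => ?_)
    rw [inner_zero_right]
    calc ⟪v, (X (lp.single 2 0 w)) (m+2)⟫
        = ⟪lp.single 2 (m+2) v, X (lp.single 2 0 w)⟫ :=
          (inner_single_left' _ _ _).symm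
      _ = ⟪adjoint X (lp.single 2 (m+2) v), lp.single 2 0 w⟫ := by
          rw [adjoint_inner_left]
      _ = ⟪Y (lp.single 2 (m+1) v), lp.single 2 0 w⟫ := by
          have e := singleS S hS (m+1) v
          rw [← e, ← hYa]
      _ = ⟪(Y (lp.single 2 (m+1) v)) 0, w⟫ := inner_single_right' _ _ _
      _ = 0 := by rw [hY0]; simp
  intro k
  induction k with
  | zero =>
    intro v
    apply lp.ext
    funext j
    match j with
    | 0 =>
      rw [lp_add_apply, single_self, single_ne 1 _ (by omega : (0:ℕ) ≠ 1), add_zero]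
    | 1 =>
      rw [lp_add_apply, single_self, single_ne 0 _ (by omega : (1:ℕ) ≠ 0), zero_add]
    | (m+2) =>
      rw [lp_add_apply, single_ne 0 _ (by omega : m+2 ≠ 0),
        single_ne 1 _ (by omega : m+2 ≠ 1), hXtri, add_zero]
  | succ k ih =>
    intro v
    have e := singleS S hS k v
    rw [← e, hXc, ih, map_add, singleS S hS, singleS S hS]

/-- Row formula: pointwise action of `X`. -/
lemma rowX (S : ℓ²E →L[ℂ] ℓ²E) (hS : ∀ (f : ℓ²E) (n : ℕ), (S f) n = if n = 0 then 0 else f (n - 1))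
    (X Y : ℓ²E →L[ℂ] ℓ²E)
    (hXS : X ∘L S = S ∘L X) (hYS : Y ∘L S = S ∘L Y)
    (hYX : Y = adjoint X ∘L S) :
    ∀ (f : ℓ²E) (n : ℕ), (X f) n =
      (X (lp.single 2 0 (f n))) 0 +
      (if n = 0 then 0 else (X (lp.single 2 0 (f (n-1)))) 1) := by
  have hcol := colX S hS X Y hXS hYS hYX
  intro f n
  refine ext_inner_left ℂ (fun w => ?_)
  set r : ℓ²E := adjoint X (lp.single 2 n w) with hrdef
  have hrk : ∀ (k : ℕ) (v : E), ⟪r k, v⟫ =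
      ⟪w, (lp.single 2 k ((X (lp.single 2 0 v)) 0) +
        lp.single 2 (k+1) ((X (lp.single 2 0 v)) 1) : ℓ²E) n⟫ := by
    intro k v
    calc ⟪r k, v⟫ = ⟪r, lp.single 2 k v⟫ := (inner_single_right' _ _ _).symm
      _ = ⟪lp.single 2 n w, X (lp.single 2 k v)⟫ := adjoint_inner_left _ _ _
      _ = ⟪w, (X (lp.single 2 k v)) n⟫ := inner_single_left' _ _ _
      _ = _ := by rw [hcol]
  have hrk0 : ∀ k : ℕ, k ≠ n → k + 1 ≠ n → r k = 0 := by
    intro k h1 h2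
    refine ext_inner_right ℂ (fun v => ?_)
    rw [hrk, inner_zero_left, lp_add_apply,
      single_ne k _ (Ne.symm h1), single_ne (k+1) _ (Ne.symm h2)]
    simp
  have hXw : ⟪w, (X f) n⟫ = ⟪lp.single 2 n w, X f⟫ := (inner_single_left' _ _ _).symm
  have hadj : ⟪lp.single 2 n w, X f⟫ = ⟪r, f⟫ := (adjoint_inner_left _ _ _).symm
  rcases n with _ | m
  · have hdec : r = lp.single 2 0 (r 0) := by
      apply lp.ext
      funext j
      match j with
      | 0 => rw [single_self]
      | (m+1) =>
        rw [single_ne 0 _ (by omega : m+1 ≠ 0), hrk0 (m+1) (by omega) (by omega)]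
    have h0 : ⟪r 0, f 0⟫ = ⟪w, (X (lp.single 2 0 (f 0))) 0⟫ := by
      have := hrk 0 (f 0)
      rwa [lp_add_apply, single_self, single_ne 1 _ (by omega : (0:ℕ) ≠ 1),
        add_zero] at this
    rw [if_pos rfl, add_zero, hXw, hadj, hdec, inner_single_left']
    exact h0
  · have hdec : r = lp.single 2 (m+1) (r (m+1)) + lp.single 2 m (r m) := by
      apply lp.ext
      funext j
      rcases eq_or_ne j (m+1) with rfl | h1
      · rw [lp_add_apply, single_self, single_ne m _ (by omega : m+1 ≠ m), add_zero]
      · rcases eq_or_ne j m with rfl | h2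
        · rw [lp_add_apply, single_self, single_ne _ _ h1, zero_add]
        · rw [lp_add_apply, single_ne (m+1) _ h1, single_ne m _ h2,
            add_zero, hrk0 j h1 (by omega)]
    have h1 : ⟪r (m+1), f (m+1)⟫ = ⟪w, (X (lp.single 2 0 (f (m+1)))) 0⟫ := by
      have := hrk (m+1) (f (m+1))
      rwa [lp_add_apply, single_self,
        single_ne (m+2) _ (by omega : m+1 ≠ m+2), add_zero] at this
    have h2 : ⟪r m, f m⟫ = ⟪w, (X (lp.single 2 0 (f m))) 1⟫ := by
      have := hrk m (f m)
      rwa [lp_add_apply, single_self,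
        single_ne m _ (by omega : m+1 ≠ m), zero_add] at this
    rw [if_neg (by omega : m + 1 ≠ 0), hXw, hadj, hdec, inner_add_left,
      inner_single_left', inner_single_left']
    simp only [Nat.add_sub_cancel]
    rw [h1, h2, ← inner_add_right]

/-- The superdiagonal of `X` is adjoint to the diagonal of `Y`. -/
lemma adjX (S : ℓ²E →L[ℂ] ℓ²E) (hS : ∀ (f : ℓ²E) (n : ℕ), (S f) n = if n = 0 then 0 else f (n - 1))
    (X Y : ℓ²E →L[ℂ] ℓ²E)
    (hXS : X ∘L S = S ∘L X) (hYS : Y ∘L S = S ∘L Y)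
    (hXY : X = adjoint Y ∘L S) :
    ∀ (v w : E), ⟪(X (lp.single 2 0 v)) 1, w⟫ = ⟪v, (Y (lp.single 2 0 w)) 0⟫ := by
  intro v w
  have hXa : X (lp.single 2 0 v) = adjoint Y (lp.single 2 1 v) := by
    rw [hXY, ContinuousLinearMap.comp_apply, singleS S hS]
  have hcolY := colX S hS Y X hYS hXS hXY
  calc ⟪(X (lp.single 2 0 v)) 1, w⟫
      = ⟪X (lp.single 2 0 v), lp.single 2 1 w⟫ := (inner_single_right' _ _ _).symm
    _ = ⟪adjoint Y (lp.single 2 1 v), lp.single 2 1 w⟫ := by rw [hXa]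
    _ = ⟪lp.single 2 1 v, Y (lp.single 2 1 w)⟫ := adjoint_inner_left _ _ _
    _ = ⟪v, (Y (lp.single 2 1 w)) 1⟫ := inner_single_left' _ _ _
    _ = ⟪v, (Y (lp.single 2 0 w)) 0⟫ := by
        rw [hcolY 1 w, lp_add_apply, single_self,
          single_ne 2 _ (by omega : (1:ℕ) ≠ 2), add_zero]

end ShiftAux

/-- If `X, Y ∈ B(ℓ²(ℕ,E))` commute with the unilateral shift `S` and satisfy
`X = Y* S` and `Y = X* S`, then there is a unique pair `(G₁, G₂)` of operators on `E` with
`X = Γ(G₁) + S Γ(G₂*)` and `Y = Γ(G₂) + S Γ(G₁*)`. -/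
theorem statement8
    {E : Type*} [NormedAddCommGroup E] [InnerProductSpace ℂ E] [CompleteSpace E]
    (S : lp (fun _ : ℕ => E) 2 →L[ℂ] lp (fun _ : ℕ => E) 2)
    (hS : ∀ (f : lp (fun _ : ℕ => E) 2) (n : ℕ), (S f) n = if n = 0 then 0 else f (n - 1))
    (Γ : (E →L[ℂ] E) → (lp (fun _ : ℕ => E) 2 →L[ℂ] lp (fun _ : ℕ => E) 2))
    (hΓ : ∀ (T : E →L[ℂ] E) (f : lp (fun _ : ℕ => E) 2) (n : ℕ), (Γ T f) n = T (f n))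
    (X Y : lp (fun _ : ℕ => E) 2 →L[ℂ] lp (fun _ : ℕ => E) 2)
    (hXS : X ∘L S = S ∘L X) (hYS : Y ∘L S = S ∘L Y)
    (hXY : X = adjoint Y ∘L S) (hYX : Y = adjoint X ∘L S) :
    ∃! GG : (E →L[ℂ] E) × (E →L[ℂ] E),
      X = Γ GG.1 + S ∘L Γ (adjoint GG.2) ∧ Y = Γ GG.2 + S ∘L Γ (adjoint GG.1) := by
  classical
  set G₁ : E →L[ℂ] E := evCLM 0 ∘L X ∘L sCLM 0 with hG₁def
  set G₂ : E →L[ℂ] E := evCLM 0 ∘L Y ∘L sCLM 0 with hG₂def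
  have hG₁v : ∀ v : E, G₁ v = (X (lp.single 2 0 v)) 0 := fun v => rfl
  have hG₂v : ∀ v : E, G₂ v = (Y (lp.single 2 0 v)) 0 := fun v => rfl
  -- superdiagonals are adjoints of the other diagonal
  have hA₁X : ∀ v : E, (X (lp.single 2 0 v)) 1 = adjoint G₂ v := by
    intro v
    refine ext_inner_right ℂ (fun w => ?_)
    rw [adjoint_inner_left, hG₂v]
    exact adjX S hS X Y hXS hYS hXY v w
  have hA₁Y : ∀ v : E, (Y (lp.single 2 0 v)) 1 = adjoint G₁ v := by
    intro v
    refine ext_inner_right ℂ (fun w => ?_)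
    rw [adjoint_inner_left, hG₁v]
    exact adjX S hS Y X hYS hXS hYX v w
  have hXeq : X = Γ G₁ + S ∘L Γ (adjoint G₂) := by
    refine ContinuousLinearMap.ext fun f => lp.ext (funext fun n => ?_)
    rw [rowX S hS X Y hXS hYS hYX f n, ContinuousLinearMap.add_apply, lp_add_apply,
      ContinuousLinearMap.comp_apply, hS, hΓ, hΓ, ← hG₁v]
    rcases eq_or_ne n 0 with rfl | hn
    · simp
    · rw [if_neg hn, if_neg hn, hA₁X]
  have hYeq : Y = Γ G₂ + S ∘L Γ (adjoint G₁) := by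
    refine ContinuousLinearMap.ext fun f => lp.ext (funext fun n => ?_)
    rw [rowX S hS Y X hYS hXS hXY f n, ContinuousLinearMap.add_apply, lp_add_apply,
      ContinuousLinearMap.comp_apply, hS, hΓ, hΓ, ← hG₂v]
    rcases eq_or_ne n 0 with rfl | hn
    · simp
    · rw [if_neg hn, if_neg hn, hA₁Y]
  refine ⟨(G₁, G₂), ⟨hXeq, hYeq⟩, ?_⟩
  rintro ⟨H₁, H₂⟩ ⟨h₁, h₂⟩
  have key1 : ∀ v : E, (X (lp.single 2 0 v)) 0 = H₁ v := by
    intro v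
    rw [h₁, ContinuousLinearMap.add_apply, lp_add_apply, hΓ,
      ContinuousLinearMap.comp_apply, hS, if_pos rfl, add_zero, single_self]
  have key2 : ∀ v : E, (Y (lp.single 2 0 v)) 0 = H₂ v := by
    intro v
    rw [h₂, ContinuousLinearMap.add_apply, lp_add_apply, hΓ,
      ContinuousLinearMap.comp_apply, hS, if_pos rfl, add_zero, single_self]
  have e₁ : H₁ = G₁ := ContinuousLinearMap.ext fun v => by rw [← key1 v, hG₁v]
  have e₂ : H₂ = G₂ := ContinuousLinearMap.ext fun v => by rw [← key2 v, hG₂v]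
  exact Prod.ext e₁ e₂
end

section
/- Let E and E_* be complex Hilbert spaces, F_1, F_2 ∈ B(E), and let V : ℓ²(ℕ,E_*) → ℓ²(ℕ,E) be an isometry intertwining the unilateral shifts, V S = S V (such a V is the multiplication operator of the inner function arising in the Beurling–Lax–Halmos representation of the shift-invariant subspace M := range V). Then M is invariant under both Γ(F_1*) + S Γ(F_2) and Γ(F_2*) + S Γ(F_1) if and only if there exist unique operators G_1, G_2 ∈ B(E_*) such that (Γ(F_1*) + S Γ(F_2)) V = V (Γ(G_1) + S Γ(G_2*)) and (Γ(F_2*) + S Γ(F_1)) V = V (Γ(G_2) + S Γ(G_1*)). -/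
open ContinuousLinearMap

set_option linter.unusedSectionVars false

local notation "⟪" x ", " y "⟫" => @inner ℂ _ _ x y

namespace Statement9Aux

variable {H : Type*} [NormedAddCommGroup H] [InnerProductSpace ℂ H] [CompleteSpace H]

lemma single_add (n : ℕ) (a b : H) :
    lp.single (E := fun _ : ℕ => H) 2 n (a + b) =
      lp.single 2 n a + lp.single 2 n b := by
  apply lp.ext
  funext j
  by_cases h : j = n
  · subst h
    simp [lp.coeFn_add, lp.single_apply_self]
  · simp [lp.coeFn_add, lp.single_apply_ne _ _ _ h]

lemma norm_single (n : ℕ) (a : H) :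
    ‖lp.single (E := fun _ : ℕ => H) 2 n a‖ = ‖a‖ :=
  lp.norm_single (E := fun _ : ℕ => H) (p := 2) (by norm_num) n a

lemma single_coord (n j : ℕ) (a : H) :
    (lp.single (E := fun _ : ℕ => H) 2 n a) j = if j = n then a else 0 := by
  by_cases h : j = n
  · subst h
    rw [lp.single_apply_self, if_pos rfl]
  · rw [lp.single_apply_ne (E := fun _ : ℕ => H) 2 n a h, if_neg h]

variable (S : lp (fun _ : ℕ => H) 2 →L[ℂ] lp (fun _ : ℕ => H) 2)
variable (hS : ∀ (f : lp (fun _ : ℕ => H) 2) (n : ℕ), (S f) n = if n = 0 then 0 else f (n - 1))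
include hS

lemma hSinner (x y : lp (fun _ : ℕ => H) 2) :
    HasSum (fun n : ℕ => ⟪x n, y (n + 1)⟫) ⟪S x, y⟫ := by
  have h := lp.hasSum_inner (𝕜 := ℂ) (S x) y
  have h2 := (Function.Injective.hasSum_iff (f := fun k => ⟪(S x) k, y k⟫)
      (g := Nat.succ) Nat.succ_injective ?_).2 h
  · convert h2 using 1
    funext n
    simp [Function.comp, hS, Nat.succ_ne_zero]
  · intro k hk
    have hk0 : k = 0 := by
      rcases k with _ | k
      · rfl
      · exact absurd ⟨k, rfl⟩ hk
    subst hk0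
    simp [hS]

lemma SS_inner (x y : lp (fun _ : ℕ => H) 2) : ⟪S x, S y⟫ = ⟪x, y⟫ := by
  have h := hSinner S hS x (S y)
  simp only [hS, Nat.succ_ne_zero, if_false, Nat.add_sub_cancel] at h
  exact (h.unique (lp.hasSum_inner (𝕜 := ℂ) x y))

lemma single_succ (n : ℕ) (a : H) :
    S (lp.single 2 n a) = lp.single 2 (n + 1) a := by
  apply lp.ext
  funext j
  rw [hS]
  rcases j with _ | j
  · rw [if_pos rfl]
    exact (lp.single_apply_ne (E := fun _ : ℕ => H) 2 (n + 1) a (by omega)).symm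
  · simp only [Nat.succ_ne_zero, if_false, Nat.add_sub_cancel]
    by_cases h : j = n
    · subst h
      rw [lp.single_apply_self, lp.single_apply_self]
    · rw [lp.single_apply_ne (E := fun _ : ℕ => H) 2 n a h,
        lp.single_apply_ne (E := fun _ : ℕ => H) 2 (n + 1) a (by omega : j + 1 ≠ n + 1)]

variable (Γ : (H →L[ℂ] H) → (lp (fun _ : ℕ => H) 2 →L[ℂ] lp (fun _ : ℕ => H) 2))
variable (hΓ : ∀ (T : H →L[ℂ] H) (f : lp (fun _ : ℕ => H) 2) (n : ℕ), (Γ T f) n = T (f n))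
include hΓ

lemma inner_Gamma (T : H →L[ℂ] H) (x y : lp (fun _ : ℕ => H) 2) :
    ⟪Γ T x, y⟫ = ⟪x, Γ (adjoint T) y⟫ := by
  rw [lp.inner_eq_tsum, lp.inner_eq_tsum]
  refine tsum_congr fun n => ?_
  rw [hΓ, hΓ, adjoint_inner_right]

lemma shift_Gamma (T : H →L[ℂ] H) (a b : lp (fun _ : ℕ => H) 2) :
    ⟪S (Γ T a), b⟫ = ⟪S a, Γ (adjoint T) b⟫ := by
  have h1 := hSinner S hS (Γ T a) b
  have h2 := hSinner S hS a (Γ (adjoint T) b)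
  simp only [hΓ, adjoint_inner_right] at h1 h2
  exact h1.unique h2

lemma Gamma_S (T : H →L[ℂ] H) (f : lp (fun _ : ℕ => H) 2) :
    Γ T (S f) = S (Γ T f) := by
  apply lp.ext
  funext n
  rw [hΓ, hS, hS]
  rcases n with _ | n
  · simp
  · simp [hΓ]

lemma AB_inner (T₁ T₂ : H →L[ℂ] H) (a b : lp (fun _ : ℕ => H) 2) :
    ⟪(Γ (adjoint T₁) + S ∘L Γ T₂) a, b⟫ = ⟪S a, (Γ (adjoint T₂) + S ∘L Γ T₁) b⟫ := by
  have expandL : (Γ (adjoint T₁) + S ∘L Γ T₂) a = Γ (adjoint T₁) a + S (Γ T₂ a) := rfl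
  have expandR : (Γ (adjoint T₂) + S ∘L Γ T₁) b = Γ (adjoint T₂) b + S (Γ T₁ b) := rfl
  rw [expandL, expandR, inner_add_left, inner_add_right]
  have t1 : ⟪Γ (adjoint T₁) a, b⟫ = ⟪S a, S (Γ T₁ b)⟫ := by
    rw [SS_inner S hS, inner_Gamma S hS Γ hΓ, adjoint_adjoint]
  have t2 : ⟪S (Γ T₂ a), b⟫ = ⟪S a, Γ (adjoint T₂) b⟫ := shift_Gamma S hS Γ hΓ T₂ a b
  rw [t1, t2, add_comm]


omit hS hΓ in
/-- The `0`-th Taylor coefficient of `X` as a continuous linear map. -/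
noncomputable def coeffCLM (X : lp (fun _ : ℕ => H) 2 →L[ℂ] lp (fun _ : ℕ => H) 2) :
    H →L[ℂ] H :=
  LinearMap.mkContinuous
    { toFun := fun x => (X (lp.single 2 0 x)) 0
      map_add' := by
        intro a b
        show (X (lp.single 2 0 (a + b))) 0 = (X (lp.single 2 0 a)) 0 + (X (lp.single 2 0 b)) 0
        rw [single_add, map_add]
        simp [lp.coeFn_add]
      map_smul' := by
        intro c a
        show (X (lp.single 2 0 (c • a))) 0 = c • (X (lp.single 2 0 a)) 0
        rw [lp.single_smul, map_smul]
        simp [lp.coeFn_smul] }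
    ‖X‖
    (fun x => by
      calc ‖(X (lp.single 2 0 x)) 0‖ ≤ ‖X (lp.single 2 0 x)‖ :=
            lp.norm_apply_le_norm (by norm_num) _ 0
        _ ≤ ‖X‖ * ‖lp.single (E := fun _ : ℕ => H) 2 0 x‖ := X.le_opNorm _
        _ = ‖X‖ * ‖x‖ := by rw [norm_single])

omit hS hΓ in
lemma coeffCLM_apply (X : lp (fun _ : ℕ => H) 2 →L[ℂ] lp (fun _ : ℕ => H) 2) (x : H) :
    coeffCLM X x = (X (lp.single 2 0 x)) 0 := rfl

omit hΓ in
lemma coord0 (X Y : lp (fun _ : ℕ => H) 2 →L[ℂ] lp (fun _ : ℕ => H) 2)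
    (hXS : ∀ f, X (S f) = S (X f))
    (R : ∀ u v, ⟪Y u, v⟫ = ⟪S u, X v⟫) (x : H) :
    Y (lp.single 2 0 x) =
      lp.single 2 0 (coeffCLM Y x) + lp.single 2 1 (adjoint (coeffCLM X) x) := by
  apply lp.ext
  funext m
  have hrhs : ∀ j : ℕ,
      ((lp.single (E := fun _ : ℕ => H) 2 0 (coeffCLM Y x)
        + lp.single 2 1 (adjoint (coeffCLM X) x)) : lp (fun _ : ℕ => H) 2) j
      = (if j = 0 then coeffCLM Y x else 0) + (if j = 1 then adjoint (coeffCLM X) x else 0) := by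
    intro j
    simp [lp.coeFn_add, single_coord, Pi.single_apply]
  rcases m with _ | _ | k
  · rw [hrhs]
    norm_num
    exact (coeffCLM_apply Y x).symm
  · rw [hrhs]
    norm_num
    apply ext_inner_right ℂ
    intro y
    have step : ⟪(Y (lp.single 2 0 x)) 1, y⟫ = ⟪Y (lp.single 2 0 x), lp.single 2 1 y⟫ :=
      (lp.inner_single_right _ _ _).symm
    rw [step, R, ← single_succ S hS 0 y, hXS, SS_inner S hS, lp.inner_single_left,
      ← coeffCLM_apply X y, adjoint_inner_left]
  · rw [hrhs]
    norm_num
    have step : ∀ y : H, ⟪(Y (lp.single 2 0 x)) (k + 2), y⟫ = 0 := by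
      intro y
      have e1 : ⟪(Y (lp.single 2 0 x)) (k + 2), y⟫
          = ⟪Y (lp.single 2 0 x), lp.single 2 (k + 2) y⟫ :=
        (lp.inner_single_right _ _ _).symm
      rw [e1, R, ← single_succ S hS (k + 1) y, ← single_succ S hS k y, hXS, hXS,
        SS_inner S hS, lp.inner_single_left, hS]
      simp
    exact inner_self_eq_zero.mp (step _)

omit hΓ in
lemma singleform (X : lp (fun _ : ℕ => H) 2 →L[ℂ] lp (fun _ : ℕ => H) 2)
    (hXS : ∀ f, X (S f) = S (X f)) (P Q : H →L[ℂ] H)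
    (h0 : ∀ x, X (lp.single 2 0 x) = lp.single 2 0 (P x) + lp.single 2 1 (Q x)) :
    ∀ (n : ℕ) (x : H),
      X (lp.single 2 n x) = lp.single 2 n (P x) + lp.single 2 (n + 1) (Q x) := by
  intro n
  induction n with
  | zero => exact h0
  | succ n ih =>
    intro x
    rw [← single_succ S hS n x, hXS, ih x, map_add, single_succ S hS, single_succ S hS]

lemma fullform (X Y : lp (fun _ : ℕ => H) 2 →L[ℂ] lp (fun _ : ℕ => H) 2)
    (R' : ∀ u v, ⟪X u, v⟫ = ⟪S u, Y v⟫) (P Q : H →L[ℂ] H)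
    (hY : ∀ (n : ℕ) (x : H),
      Y (lp.single 2 n x) = lp.single 2 n (P x) + lp.single 2 (n + 1) (Q x)) :
    X = Γ (adjoint Q) + S ∘L Γ (adjoint P) := by
  ext f n
  have hrhs : ((Γ (adjoint Q) + S ∘L Γ (adjoint P)) f) n
      = adjoint Q (f n) + (if n = 0 then 0 else adjoint P (f (n - 1))) := by
    have h0 : ((Γ (adjoint Q) + S ∘L Γ (adjoint P)) f)
        = Γ (adjoint Q) f + S (Γ (adjoint P) f) := rfl
    rw [h0]
    have h2 : ((Γ (adjoint Q) f + S (Γ (adjoint P) f)) : lp (fun _ : ℕ => H) 2) n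
        = (Γ (adjoint Q) f) n + (S (Γ (adjoint P) f)) n := by simp [lp.coeFn_add]
    rw [h2, hΓ, hS]
    rcases n with _ | n
    · simp
    · simp [hΓ]
  rw [hrhs]
  apply ext_inner_right ℂ
  intro x
  have e1 : ⟪(X f) n, x⟫ = ⟪X f, lp.single 2 n x⟫ := (lp.inner_single_right _ _ _).symm
  rw [e1, R', hY n x, inner_add_right, lp.inner_single_right, lp.inner_single_right,
    hS, hS]
  rcases n with _ | n
  · simp [adjoint_inner_left]
  · simp only [Nat.succ_ne_zero, if_false, Nat.add_sub_cancel]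
    rw [inner_add_left, adjoint_inner_left, adjoint_inner_left, add_comm]

lemma key (X Y : lp (fun _ : ℕ => H) 2 →L[ℂ] lp (fun _ : ℕ => H) 2)
    (hXS : ∀ f, X (S f) = S (X f)) (hYS : ∀ f, Y (S f) = S (Y f))
    (R : ∀ u v, ⟪Y u, v⟫ = ⟪S u, X v⟫) (R' : ∀ u v, ⟪X u, v⟫ = ⟪S u, Y v⟫) :
    ∃ G₁ G₂ : H →L[ℂ] H,
      X = Γ G₁ + S ∘L Γ (adjoint G₂) ∧ Y = Γ G₂ + S ∘L Γ (adjoint G₁) := by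
  have d1 := coord0 S hS X Y hXS R
  have d2 := coord0 S hS Y X hYS R'
  have s1 := singleform S hS X hXS (coeffCLM X) (adjoint (coeffCLM Y)) d2
  have s2 := singleform S hS Y hYS (coeffCLM Y) (adjoint (coeffCLM X)) d1
  have f1 := fullform S hS Γ hΓ X Y R' (coeffCLM Y) (adjoint (coeffCLM X)) s2
  have f2 := fullform S hS Γ hΓ Y X R (coeffCLM X) (adjoint (coeffCLM Y)) s1
  rw [adjoint_adjoint] at f1 f2
  exact ⟨coeffCLM X, coeffCLM Y, f1, f2⟩

end Statement9Aux


set_option maxHeartbeats 1000000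

/-- Beurling–Lax–Halmos type theorem for a triple of operators (Theorem 3.1, first part):
`M = range V` is invariant under `M_{F₁*+F₂ z}` and `M_{F₂*+F₁ z}` if and only if there are
unique `G₁, G₂ ∈ B(E_*)` with `(Γ(F₁*) + S Γ(F₂)) V = V (Γ(G₁) + S Γ(G₂*))` and
`(Γ(F₂*) + S Γ(F₁)) V = V (Γ(G₂) + S Γ(G₁*))`. -/
theorem statement9
    {E Estar : Type*} [NormedAddCommGroup E] [InnerProductSpace ℂ E] [CompleteSpace E]
    [NormedAddCommGroup Estar] [InnerProductSpace ℂ Estar] [CompleteSpace Estar]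
    (S : lp (fun _ : ℕ => E) 2 →L[ℂ] lp (fun _ : ℕ => E) 2)
    (hS : ∀ (f : lp (fun _ : ℕ => E) 2) (n : ℕ), (S f) n = if n = 0 then 0 else f (n - 1))
    (S' : lp (fun _ : ℕ => Estar) 2 →L[ℂ] lp (fun _ : ℕ => Estar) 2)
    (hS' : ∀ (f : lp (fun _ : ℕ => Estar) 2) (n : ℕ), (S' f) n = if n = 0 then 0 else f (n - 1))
    (Γ : (E →L[ℂ] E) → (lp (fun _ : ℕ => E) 2 →L[ℂ] lp (fun _ : ℕ => E) 2))
    (hΓ : ∀ (T : E →L[ℂ] E) (f : lp (fun _ : ℕ => E) 2) (n : ℕ), (Γ T f) n = T (f n))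
    (Γ' : (Estar →L[ℂ] Estar) → (lp (fun _ : ℕ => Estar) 2 →L[ℂ] lp (fun _ : ℕ => Estar) 2))
    (hΓ' : ∀ (T : Estar →L[ℂ] Estar) (f : lp (fun _ : ℕ => Estar) 2) (n : ℕ),
      (Γ' T f) n = T (f n))
    (F₁ F₂ : E →L[ℂ] E)
    (V : lp (fun _ : ℕ => Estar) 2 →L[ℂ] lp (fun _ : ℕ => E) 2)
    (hViso : ∀ f, ‖V f‖ = ‖f‖)
    (hVS : V ∘L S' = S ∘L V) :
    ((∀ x ∈ Set.range (V : lp (fun _ : ℕ => Estar) 2 → lp (fun _ : ℕ => E) 2),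
        (Γ (adjoint F₁) + S ∘L Γ F₂) x ∈ Set.range
          (V : lp (fun _ : ℕ => Estar) 2 → lp (fun _ : ℕ => E) 2)) ∧
      (∀ x ∈ Set.range (V : lp (fun _ : ℕ => Estar) 2 → lp (fun _ : ℕ => E) 2),
        (Γ (adjoint F₂) + S ∘L Γ F₁) x ∈ Set.range
          (V : lp (fun _ : ℕ => Estar) 2 → lp (fun _ : ℕ => E) 2)))
    ↔ (∃! GG : (Estar →L[ℂ] Estar) × (Estar →L[ℂ] Estar),
        (Γ (adjoint F₁) + S ∘L Γ F₂) ∘L V = V ∘L (Γ' GG.1 + S' ∘L Γ' (adjoint GG.2)) ∧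
        (Γ (adjoint F₂) + S ∘L Γ F₁) ∘L V = V ∘L (Γ' GG.2 + S' ∘L Γ' (adjoint GG.1))) := by
  classical
  set A := Γ (adjoint F₁) + S ∘L Γ F₂ with hAdef
  set B := Γ (adjoint F₂) + S ∘L Γ F₁ with hBdef
  have Vinner : ∀ f g, ⟪V f, V g⟫ = ⟪f, g⟫ := by
    intro f g
    exact LinearIsometry.inner_map_map
      { toLinearMap := (V : lp (fun _ : ℕ => Estar) 2 →ₗ[ℂ] lp (fun _ : ℕ => E) 2),
        norm_map' := hViso } f g
  have Vinj : Function.Injective (V : lp (fun _ : ℕ => Estar) 2 → lp (fun _ : ℕ => E) 2) := by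
    intro a b h
    have : ‖V (a - b)‖ = ‖a - b‖ := hViso _
    rw [map_sub, h, sub_self, norm_zero] at this
    exact sub_eq_zero.mp (norm_eq_zero.mp this.symm)
  have VstarV : ∀ g, adjoint V (V g) = g := by
    intro g
    apply ext_inner_right ℂ
    intro u
    rw [adjoint_inner_left, Vinner]
  have hVS' : ∀ f, V (S' f) = S (V f) := fun f => DFunLike.congr_fun hVS f
  have hAS : ∀ g, A (S g) = S (A g) := by
    intro g
    show Γ (adjoint F₁) (S g) + S (Γ F₂ (S g)) = S (Γ (adjoint F₁) g + S (Γ F₂ g))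
    rw [Statement9Aux.Gamma_S S hS Γ hΓ, Statement9Aux.Gamma_S S hS Γ hΓ, map_add]
  have hBS : ∀ g, B (S g) = S (B g) := by
    intro g
    show Γ (adjoint F₂) (S g) + S (Γ F₁ (S g)) = S (Γ (adjoint F₂) g + S (Γ F₁ g))
    rw [Statement9Aux.Gamma_S S hS Γ hΓ, Statement9Aux.Gamma_S S hS Γ hΓ, map_add]
  constructor
  · rintro ⟨h1, h2⟩
    set X := adjoint V ∘L A ∘L V with hXdef
    set Y := adjoint V ∘L B ∘L V with hYdef
    have hAV : ∀ f, A (V f) = V (X f) := by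
      intro f
      obtain ⟨g, hg⟩ := h1 (V f) ⟨f, rfl⟩
      have hXf : X f = adjoint V (A (V f)) := rfl
      rw [hXf, ← hg, VstarV]
    have hBV : ∀ f, B (V f) = V (Y f) := by
      intro f
      obtain ⟨g, hg⟩ := h2 (V f) ⟨f, rfl⟩
      have hYf : Y f = adjoint V (B (V f)) := rfl
      rw [hYf, ← hg, VstarV]
    have hXS' : ∀ f, X (S' f) = S' (X f) := by
      intro f
      apply Vinj
      calc V (X (S' f)) = A (V (S' f)) := (hAV _).symm
        _ = A (S (V f)) := by rw [hVS']
        _ = S (A (V f)) := hAS _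
        _ = S (V (X f)) := by rw [hAV]
        _ = V (S' (X f)) := (hVS' _).symm
    have hYS' : ∀ f, Y (S' f) = S' (Y f) := by
      intro f
      apply Vinj
      calc V (Y (S' f)) = B (V (S' f)) := (hBV _).symm
        _ = B (S (V f)) := by rw [hVS']
        _ = S (B (V f)) := hBS _
        _ = S (V (Y f)) := by rw [hBV]
        _ = V (S' (Y f)) := (hVS' _).symm
    have R : ∀ u v, ⟪Y u, v⟫ = ⟪S' u, X v⟫ := by
      intro u v
      calc ⟪Y u, v⟫ = ⟪V (Y u), V v⟫ := (Vinner _ _).symm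
        _ = ⟪B (V u), V v⟫ := by rw [hBV]
        _ = ⟪S (V u), A (V v)⟫ := Statement9Aux.AB_inner S hS Γ hΓ F₂ F₁ (V u) (V v)
        _ = ⟪V (S' u), V (X v)⟫ := by rw [hVS', hAV]
        _ = ⟪S' u, X v⟫ := Vinner _ _
    have R' : ∀ u v, ⟪X u, v⟫ = ⟪S' u, Y v⟫ := by
      intro u v
      calc ⟪X u, v⟫ = ⟪V (X u), V v⟫ := (Vinner _ _).symm
        _ = ⟪A (V u), V v⟫ := by rw [hAV]
        _ = ⟪S (V u), B (V v)⟫ := Statement9Aux.AB_inner S hS Γ hΓ F₁ F₂ (V u) (V v)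
        _ = ⟪V (S' u), V (Y v)⟫ := by rw [hVS', hBV]
        _ = ⟪S' u, Y v⟫ := Vinner _ _
    obtain ⟨G₁, G₂, e1, e2⟩ := Statement9Aux.key S' hS' Γ' hΓ' X Y hXS' hYS' R R'
    have main1 : A ∘L V = V ∘L (Γ' G₁ + S' ∘L Γ' (adjoint G₂)) := by
      refine ContinuousLinearMap.ext fun f => ?_
      show A (V f) = V ((Γ' G₁ + S' ∘L Γ' (adjoint G₂)) f)
      rw [hAV, e1]
    have main2 : B ∘L V = V ∘L (Γ' G₂ + S' ∘L Γ' (adjoint G₁)) := by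
      refine ContinuousLinearMap.ext fun f => ?_
      show B (V f) = V ((Γ' G₂ + S' ∘L Γ' (adjoint G₁)) f)
      rw [hBV, e2]
    refine ⟨(G₁, G₂), ⟨main1, main2⟩, ?_⟩
    rintro ⟨H₁, H₂⟩ ⟨k1, k2⟩
    have hPQ : ∀ (P Q : Estar →L[ℂ] Estar),
        A ∘L V = V ∘L (Γ' P + S' ∘L Γ' (adjoint Q)) →
        (Γ' P + S' ∘L Γ' (adjoint Q)) = X := by
      intro P Q hk
      refine ContinuousLinearMap.ext fun f => ?_
      apply Vinj
      have := DFunLike.congr_fun hk f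
      calc V ((Γ' P + S' ∘L Γ' (adjoint Q)) f) = A (V f) := this.symm
        _ = V (X f) := hAV f
    have eq1 : (Γ' H₁ + S' ∘L Γ' (adjoint H₂)) = (Γ' G₁ + S' ∘L Γ' (adjoint G₂)) := by
      rw [hPQ H₁ H₂ k1, e1]
    have cH : ∀ (P Q : Estar →L[ℂ] Estar) (x : Estar) (j : ℕ),
        ((Γ' P + S' ∘L Γ' (adjoint Q)) (lp.single 2 0 x)) j
        = (if j = 0 then P x else 0) + (if j = 1 then adjoint Q x else 0) := by
      intro P Q x j
      have h0 : ((Γ' P + S' ∘L Γ' (adjoint Q)) (lp.single 2 0 x))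
          = Γ' P (lp.single 2 0 x) + S' (Γ' (adjoint Q) (lp.single 2 0 x)) := rfl
      have h2 : ((Γ' P (lp.single 2 0 x) + S' (Γ' (adjoint Q) (lp.single 2 0 x))) :
          lp (fun _ : ℕ => Estar) 2) j
          = (Γ' P (lp.single 2 0 x)) j + (S' (Γ' (adjoint Q) (lp.single 2 0 x))) j := by
        simp [lp.coeFn_add]
      rw [h0, h2, hΓ', hS', Statement9Aux.single_coord]
      rcases j with _ | j
      · norm_num
      · rcases j with _ | j
        · norm_num [hΓ', Statement9Aux.single_coord]
        · norm_num [hΓ', Statement9Aux.single_coord]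
    have hH1 : H₁ = G₁ := by
      ext x
      have := congrArg (fun (T : lp (fun _ : ℕ => Estar) 2 →L[ℂ] lp (fun _ : ℕ => Estar) 2)
        => (T (lp.single 2 0 x)) 0) eq1
      simp only [cH] at this
      norm_num at this
      exact this
    have hH2 : H₂ = G₂ := by
      have hadj : adjoint H₂ = adjoint G₂ := by
        ext x
        have := congrArg (fun (T : lp (fun _ : ℕ => Estar) 2 →L[ℂ] lp (fun _ : ℕ => Estar) 2)
          => (T (lp.single 2 0 x)) 1) eq1
        simp only [cH] at this
        norm_num at this
        exact this
      rw [← adjoint_adjoint (A := H₂), hadj, adjoint_adjoint]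
    rw [hH1, hH2]
  · rintro ⟨⟨G₁, G₂⟩, ⟨k1, k2⟩, -⟩
    constructor
    · rintro x ⟨f, rfl⟩
      exact ⟨(Γ' G₁ + S' ∘L Γ' (adjoint G₂)) f, (DFunLike.congr_fun k1 f).symm⟩
    · rintro x ⟨f, rfl⟩
      exact ⟨(Γ' G₂ + S' ∘L Γ' (adjoint G₁)) f, (DFunLike.congr_fun k2 f).symm⟩
end

section
/- Let E, E_*, F_1, F_2 and the isometry V with V S = S V be as in the context, and suppose G_1, G_2 ∈ B(E_*) satisfy (Γ(F_1*) + S Γ(F_2)) V = V (Γ(G_1) + S Γ(G_2*)) and (Γ(F_2*) + S Γ(F_1)) V = V (Γ(G_2) + S Γ(G_1*)). If the operators Γ(F_1*) + S Γ(F_2) and Γ(F_2*) + S Γ(F_1) commute with each other and ‖Γ(F_2*) + S Γ(F_1)‖ ≤ 1 (so that (M_{F_1*+F_2 z}, M_{F_2*+F_1 z}, M_z) is a tetrablock isometry on H²_E(𝔻)), then Γ(G_1) + S Γ(G_2*) and Γ(G_2) + S Γ(G_1*) commute with each other and ‖Γ(G_2) + S Γ(G_1*)‖ ≤ 1 (so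 that (M_{G_1+G_2* z}, M_{G_2+G_1* z}, M_z) is a tetrablock isometry on H²_{E_*}(𝔻)). -/
open ContinuousLinearMap

/-- Theorem 3.1, second part: if `(M_{F₁*+F₂z}, M_{F₂*+F₁z}, M_z)` is a tetrablock isometry
on `H²_E(𝔻)` and `G₁, G₂` are obtained from the Beurling–Lax–Halmos representation `V`, then
`(M_{G₁+G₂*z}, M_{G₂+G₁*z}, M_z)` is a tetrablock isometry on `H²_{E_*}(𝔻)`. -/
theorem statement10
    {E Estar : Type*} [NormedAddCommGroup E] [InnerProductSpace ℂ E] [CompleteSpace E]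
    [NormedAddCommGroup Estar] [InnerProductSpace ℂ Estar] [CompleteSpace Estar]
    (S : lp (fun _ : ℕ => E) 2 →L[ℂ] lp (fun _ : ℕ => E) 2)
    (hS : ∀ (f : lp (fun _ : ℕ => E) 2) (n : ℕ), (S f) n = if n = 0 then 0 else f (n - 1))
    (S' : lp (fun _ : ℕ => Estar) 2 →L[ℂ] lp (fun _ : ℕ => Estar) 2)
    (hS' : ∀ (f : lp (fun _ : ℕ => Estar) 2) (n : ℕ), (S' f) n = if n = 0 then 0 else f (n - 1))
    (Γ : (E →L[ℂ] E) → (lp (fun _ : ℕ => E) 2 →L[ℂ] lp (fun _ : ℕ => E) 2))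
    (hΓ : ∀ (T : E →L[ℂ] E) (f : lp (fun _ : ℕ => E) 2) (n : ℕ), (Γ T f) n = T (f n))
    (Γ' : (Estar →L[ℂ] Estar) → (lp (fun _ : ℕ => Estar) 2 →L[ℂ] lp (fun _ : ℕ => Estar) 2))
    (hΓ' : ∀ (T : Estar →L[ℂ] Estar) (f : lp (fun _ : ℕ => Estar) 2) (n : ℕ),
      (Γ' T f) n = T (f n))
    (F₁ F₂ : E →L[ℂ] E) (G₁ G₂ : Estar →L[ℂ] Estar)
    (V : lp (fun _ : ℕ => Estar) 2 →L[ℂ] lp (fun _ : ℕ => E) 2)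
    (hViso : ∀ f, ‖V f‖ = ‖f‖)
    (hVS : V ∘L S' = S ∘L V)
    (hG₁ : (Γ (adjoint F₁) + S ∘L Γ F₂) ∘L V = V ∘L (Γ' G₁ + S' ∘L Γ' (adjoint G₂)))
    (hG₂ : (Γ (adjoint F₂) + S ∘L Γ F₁) ∘L V = V ∘L (Γ' G₂ + S' ∘L Γ' (adjoint G₁)))
    (hcommF : (Γ (adjoint F₁) + S ∘L Γ F₂) ∘L (Γ (adjoint F₂) + S ∘L Γ F₁)
      = (Γ (adjoint F₂) + S ∘L Γ F₁) ∘L (Γ (adjoint F₁) + S ∘L Γ F₂))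
    (hnormF : ‖Γ (adjoint F₂) + S ∘L Γ F₁‖ ≤ 1) :
    (Γ' G₁ + S' ∘L Γ' (adjoint G₂)) ∘L (Γ' G₂ + S' ∘L Γ' (adjoint G₁))
      = (Γ' G₂ + S' ∘L Γ' (adjoint G₁)) ∘L (Γ' G₁ + S' ∘L Γ' (adjoint G₂)) ∧
    ‖Γ' G₂ + S' ∘L Γ' (adjoint G₁)‖ ≤ 1 := by
  set A := Γ (adjoint F₁) + S ∘L Γ F₂ with hA
  set B := Γ (adjoint F₂) + S ∘L Γ F₁ with hB
  set A' := Γ' G₁ + S' ∘L Γ' (adjoint G₂) with hA'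
  set B' := Γ' G₂ + S' ∘L Γ' (adjoint G₁) with hB'
  have hVinj : Function.Injective V := by
    intro x y h
    have h0 : ‖x - y‖ = 0 := by rw [← hViso]; simp [map_sub, h]
    simpa [sub_eq_zero] using norm_eq_zero.mp h0
  constructor
  · have key : V ∘L (A' ∘L B') = V ∘L (B' ∘L A') := by
      calc V ∘L (A' ∘L B') = (V ∘L A') ∘L B' := by rw [comp_assoc]
        _ = (A ∘L V) ∘L B' := by rw [hG₁]
        _ = A ∘L (V ∘L B') := by rw [comp_assoc]
        _ = A ∘L (B ∘L V) := by rw [hG₂]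
        _ = (A ∘L B) ∘L V := by rw [comp_assoc]
        _ = (B ∘L A) ∘L V := by rw [hcommF]
        _ = B ∘L (A ∘L V) := by rw [comp_assoc]
        _ = B ∘L (V ∘L A') := by rw [hG₁]
        _ = (B ∘L V) ∘L A' := by rw [comp_assoc]
        _ = (V ∘L B') ∘L A' := by rw [hG₂]
        _ = V ∘L (B' ∘L A') := by rw [comp_assoc]
    exact ContinuousLinearMap.ext fun f => hVinj (congrArg (fun T => T f) key)
  · refine opNorm_le_bound _ zero_le_one fun f => ?_
    calc ‖B' f‖ = ‖V (B' f)‖ := (hViso _).symm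
      _ = ‖B (V f)‖ := congrArg norm (congrArg (fun T => T f) hG₂.symm)
      _ ≤ ‖B‖ * ‖V f‖ := le_opNorm _ _
      _ = ‖B‖ * ‖f‖ := by rw [hViso]
      _ ≤ 1 * ‖f‖ := mul_le_mul_of_nonneg_right hnormF (norm_nonneg _)
end
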